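/- arXiv:1412.1067 — 7 statements merged into one kernel-verified Lean document; each statement's English description precedes it below -/
import Mathlib

section
/- Fix a > 0, ξ ∈ [0,1] and γ > γ_1, and set k₀(γ) := c_1/((1 + γ_1/γ)² + 1). Then for every ζ = x + iy with x > γ and |y| > x, the series defining ℓ_a(ζ) converges absolutely and |ℓ_a(x + iy)| > a^{ξ} · √(2 γ k₀(γ)). -/
/-!
Only the imaginary part of `ℓ_a` is needed. Since `Im (c / (ζ + γ)) = -c y / |ζ + γ|²` for real `c, γ`,
`Im ℓ_a(x + iy) = y (2x + a^{2ξ} G)` with `G = ∑ c_k / |ζ + γ_k|² ≥ c_1 / |ζ + γ_1|²`, and both summands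
have the sign of `y`. Hence `|ℓ_a| ≥ |y| (2x + a^{2ξ} G)`, whose square is at least
`2 a^{2ξ} x y² c_1 / |ζ + γ_1|²`. It remains to compare `|ζ + γ_1|²` with `y² ((1 + γ_1/γ)² + 1)`,
which uses `x + γ_1 < |y| (1 + γ_1/γ)`, a consequence of `|y| > x > γ`.
-/

open Complex

lemma le_norm_add_ofReal {ζ : ℂ} (hζ : 0 ≤ ζ.re) (t : ℝ) : t ≤ ‖ζ + t‖ :=
  calc t ≤ (ζ + t).re := by simp [hζ]
    _ ≤ ‖ζ + t‖ := re_le_norm _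

lemma summable_norm_ofReal_div_add_ofReal {c γ : ℕ → ℝ} (hc : ∀ k, 0 ≤ c k)
    (hγ : ∀ k, 0 < γ k) (hS : Summable fun k => c k / γ k) {ζ : ℂ} (hζ : 0 ≤ ζ.re) :
    Summable fun k => ‖(c k : ℂ) / (ζ + γ k)‖ :=
  hS.of_nonneg_of_le (fun _ => norm_nonneg _) fun k => by
    rw [norm_div, norm_real, Real.norm_of_nonneg (hc k)]
    exact div_le_div_of_nonneg_left (hc k) (hγ k) (le_norm_add_ofReal hζ _)

lemma im_ofReal_div (c : ℝ) (w : ℂ) : ((c : ℂ) / w).im = -w.im * (c / normSq w) := by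
  rw [div_eq_mul_inv, im_ofReal_mul, inv_im]
  ring

section OfRealDivAddOfReal

variable {c γ : ℕ → ℝ} {ζ : ℂ}

lemma im_tsum_ofReal_div_add_ofReal (h : Summable fun k => (c k : ℂ) / (ζ + γ k)) :
    (∑' k, (c k : ℂ) / (ζ + γ k)).im = -ζ.im * ∑' k, c k / normSq (ζ + γ k) := by
  rw [im_tsum h, ← tsum_mul_left]
  simp only [im_ofReal_div, add_im, ofReal_im, add_zero]

lemma summable_div_normSq_add_ofReal (h : Summable fun k => (c k : ℂ) / (ζ + γ k))
    (hζ : ζ.im ≠ 0) : Summable fun k => c k / normSq (ζ + γ k) :=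
  ((imCLM.summable h).div_const (-ζ.im)).congr fun k => by
    rw [imCLM_apply, im_ofReal_div, add_im, ofReal_im, add_zero]
    field_simp

lemma im_sq_add_sub_mul_tsum (h : Summable fun k => (c k : ℂ) / (ζ + γ k)) (r A : ℝ) :
    (ζ ^ 2 + (r : ℂ) ^ 2 - (A : ℂ) * ∑' k, (c k : ℂ) / (ζ + γ k)).im
      = ζ.im * (2 * ζ.re + A * ∑' k, c k / normSq (ζ + γ k)) := by
  simp only [sub_im, add_im, im_tsum_ofReal_div_add_ofReal h, sq, mul_im,
    ofReal_re, ofReal_im]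
  ring

end OfRealDivAddOfReal

lemma mul_add_sq_add_sq_lt {γ₀ γ' x y : ℝ} (hγ₀ : 0 ≤ γ₀) (hγ' : 0 < γ') (hx : γ' < x)
    (hy : x < |y|) : γ' * ((x + γ₀) ^ 2 + y ^ 2) < x * (y ^ 2 * ((1 + γ₀ / γ') ^ 2 + 1)) := by
  have hγ₀y : γ₀ ≤ |y| * (γ₀ / γ') := by
    rw [mul_div_assoc', le_div_iff₀ hγ']
    nlinarith
  have hsum : x + γ₀ < |y| * (1 + γ₀ / γ') := by linarith
  have hsq : (x + γ₀) ^ 2 < y ^ 2 * (1 + γ₀ / γ') ^ 2 := by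
    rw [← sq_abs y, ← mul_pow]
    exact pow_lt_pow_left₀ hsum (by linarith) two_ne_zero
  have hy2 : 0 < y ^ 2 := by rw [← sq_abs]; nlinarith
  calc γ' * ((x + γ₀) ^ 2 + y ^ 2) < γ' * (y ^ 2 * ((1 + γ₀ / γ') ^ 2 + 1)) := by gcongr; linarith
    _ < x * (y ^ 2 * ((1 + γ₀ / γ') ^ 2 + 1)) := by gcongr

lemma mul_sqrt_lt_abs_mul {b γ₀ γ' x y c₀ G : ℝ} (hb : 0 < b) (hγ₀ : 0 ≤ γ₀) (hγ' : 0 < γ')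
    (hx : γ' < x) (hy : x < |y|) (hc₀ : 0 < c₀) (hG : c₀ / ((x + γ₀) ^ 2 + y ^ 2) ≤ G) :
    b * √(2 * γ' * (c₀ / ((1 + γ₀ / γ') ^ 2 + 1))) < |y| * (2 * x + b ^ 2 * G) := by
  set D := (x + γ₀) ^ 2 + y ^ 2
  set E := (1 + γ₀ / γ') ^ 2 + 1
  have hx0 : 0 < x := hγ'.trans hx
  have hD : 0 < D := by positivity
  have hE : 0 < E := by positivity
  have hG0 : 0 ≤ G := (div_nonneg hc₀.le hD.le).trans hG
  have hk : γ' * (c₀ / E) < x * y ^ 2 * (c₀ / D) := by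
    rw [mul_div_assoc', mul_div_assoc', div_lt_div_iff₀ hE hD]
    nlinarith [mul_add_sq_add_sq_lt hγ₀ hγ' hx hy]
  have hy0 : 0 < |y| := hx0.trans hy
  have hb_sqrt : b * √(2 * γ' * (c₀ / E)) = √(b ^ 2 * (2 * γ' * (c₀ / E))) := by
    rw [Real.sqrt_mul (sq_nonneg b), Real.sqrt_sq hb.le]
  rw [hb_sqrt, Real.sqrt_lt' (by positivity)]
  calc b ^ 2 * (2 * γ' * (c₀ / E)) = 2 * b ^ 2 * (γ' * (c₀ / E)) := by ring
    _ < 2 * b ^ 2 * (x * y ^ 2 * (c₀ / D)) := by gcongr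
    _ ≤ 2 * b ^ 2 * (x * y ^ 2 * G) := by gcongr
    _ ≤ (|y| * (2 * x + b ^ 2 * G)) ^ 2 := by
      rw [mul_pow, sq_abs]
      nlinarith [mul_nonneg (mul_nonneg (sq_nonneg y) hx0.le) (mul_nonneg (sq_nonneg b) hG0),
        mul_nonneg (sq_nonneg y) (sq_nonneg (b ^ 2 * G)), mul_nonneg (sq_nonneg y) (sq_nonneg x)]

theorem stmt_3_general
    (c γs : ℕ → ℝ)
    (hc : ∀ j, 0 < c j)
    (hγ0 : 0 < γs 0)
    (hγmono : StrictMono γs)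
    (hSsum : Summable fun j => c j / γs j)
    (a ξ : ℝ) (ha : 0 < a)
    (γ' : ℝ) (hγ' : γs 0 < γ')
    (k₀ : ℝ) (hk₀ : k₀ = c 0 / ((1 + γs 0 / γ') ^ 2 + 1))
    (ℓ : ℂ → ℂ)
    (hℓ : ∀ ζ, ℓ ζ = ζ ^ 2 + (a : ℂ) ^ 2
        - ((a ^ (2 * ξ) : ℝ) : ℂ) * ∑' k, (c k : ℂ) / (ζ + (γs k : ℂ))) :
    ∀ x y : ℝ, γ' < x → x < |y| →
      (Summable fun k => ‖(c k : ℂ) / (((x : ℂ) + (y : ℂ) * Complex.I) + (γs k : ℂ))‖) ∧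
      a ^ ξ * Real.sqrt (2 * γ' * k₀) < ‖ℓ ((x : ℂ) + (y : ℂ) * Complex.I)‖ := by
  intro x y hx hy
  set ζ : ℂ := x + y * I
  have hre : ζ.re = x := by simp [ζ]
  have him : ζ.im = y := by simp [ζ]
  have hγ : ∀ k, 0 < γs k := fun k => hγ0.trans_le (hγmono.monotone k.zero_le)
  have hx0 : 0 < x := by linarith
  have hnorm := summable_norm_ofReal_div_add_ofReal (fun k => (hc k).le) hγ hSsum (hre ▸ hx0.le)
  refine ⟨hnorm, ?_⟩
  have hsum := hnorm.of_norm
  have hG0 : c 0 / ((x + γs 0) ^ 2 + y ^ 2) ≤ ∑' k, c k / normSq (ζ + γs k) := by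
    have hy0 : ζ.im ≠ 0 := by rw [him, ← abs_pos]; linarith
    have hD : normSq (ζ + γs 0) = (x + γs 0) ^ 2 + y ^ 2 := by
      rw [← normSq_add_mul_I]
      push_cast [ζ]
      ring_nf
    simpa only [hD] using (summable_div_normSq_add_ofReal hsum hy0).le_tsum 0
      (fun k _ => div_nonneg (hc k).le (normSq_nonneg _))
  have ha2 : a ^ (2 * ξ) = (a ^ ξ) ^ 2 := by rw [← Real.rpow_two, ← Real.rpow_mul ha.le, mul_comm]
  calc a ^ ξ * √(2 * γ' * k₀)
      < |y| * (2 * x + (a ^ ξ) ^ 2 * ∑' k, c k / normSq (ζ + γs k)) :=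
        hk₀ ▸ mul_sqrt_lt_abs_mul (by positivity) hγ0.le (hγ0.trans hγ') hx hy (hc 0) hG0
    _ ≤ |y| * |2 * x + (a ^ ξ) ^ 2 * ∑' k, c k / normSq (ζ + γs k)| := by
      gcongr
      exact le_abs_self _
    _ = |(ℓ ζ).im| := by rw [hℓ, im_sq_add_sub_mul_tsum hsum, hre, him, ha2, abs_mul]
    _ ≤ ‖ℓ ζ‖ := abs_im_le_norm _

/-- Fix `a > 0`, `ξ ∈ [0,1]`, `γ' > γ 0` and set
`k₀ = c 0 / ((1 + γ 0 / γ')² + 1)`. Then for every `ζ = x + iy` with `x > γ'` and `|y| > x`,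
the series defining `ℓ_a ζ` converges absolutely and `‖ℓ_a (x+iy)‖ > a^ξ * √(2 γ' k₀)`.
(Sequences are indexed by `ℕ`, so `c 0, γ 0` correspond to `c_1, γ_1`.) -/
theorem stmt_3
    (c γs : ℕ → ℝ)
    (hc : ∀ j, 0 < c j)
    (hγ0 : 0 < γs 0)
    (hγmono : StrictMono γs)
    (hγtop : Filter.Tendsto γs Filter.atTop Filter.atTop)
    (hSsum : Summable fun j => c j / γs j)
    (hS : (∑' j, c j / γs j) < 1)
    (a ξ : ℝ) (ha : 0 < a) (hξ : ξ ∈ Set.Icc (0:ℝ) 1)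
    (γ' : ℝ) (hγ' : γs 0 < γ')
    (k₀ : ℝ) (hk₀ : k₀ = c 0 / ((1 + γs 0 / γ') ^ 2 + 1))
    (ℓ : ℂ → ℂ)
    (hℓ : ∀ ζ, ℓ ζ = ζ ^ 2 + (a : ℂ) ^ 2
        - ((a ^ (2 * ξ) : ℝ) : ℂ) * ∑' k, (c k : ℂ) / (ζ + (γs k : ℂ))) :
    ∀ x y : ℝ, γ' < x → x < |y| →
      (Summable fun k => ‖(c k : ℂ) / (((x : ℂ) + (y : ℂ) * Complex.I) + (γs k : ℂ))‖) ∧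
      a ^ ξ * Real.sqrt (2 * γ' * k₀) < ‖ℓ ((x : ℂ) + (y : ℂ) * Complex.I)‖ :=
  stmt_3_general c γs hc hγ0 hγmono hSsum a ξ ha γ' hγ' k₀ hk₀ ℓ hℓ
end

section
/- Fix a > 0 and ξ ∈ [0,1]. Then for every ζ = x + iy with x > 0 and |y| ≤ x, the series defining ℓ_a(ζ) converges absolutely and Re ℓ_a(x + iy) > a² − a^{2ξ} S. In particular, if a^{2(1−ξ)} > S, then |ℓ_a(x + iy)| > a² (1 − a^{−2(1−ξ)} S) > 0 for all such ζ. -/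
/-!
For `Re ζ > 0` and `γ > 0` one has `‖c / (ζ + γ)‖ ≤ c / (Re ζ + γ) < c / γ`, so the series converges
absolutely and the real part of `∑ₖ cₖ / (ζ + γₖ)` is strictly below `S`. In the sector `|Im ζ| ≤ Re ζ`
also `Re ζ² ≥ 0`, whence `Re ℓ_a(ζ) > a² - a^{2ξ} S`, and `|ℓ_a(ζ)| ≥ Re ℓ_a(ζ)` gives the second bound.
-/

open Complex

lemma norm_ofReal_div_add_ofReal_le {c t : ℝ} (hc : 0 ≤ c) {ζ : ℂ} (h : 0 < ζ.re + t) :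
    ‖(c : ℂ) / (ζ + t)‖ ≤ c / (ζ.re + t) := by
  rw [norm_div, norm_real, Real.norm_of_nonneg hc]
  gcongr
  simpa using re_le_norm (ζ + t)

lemma ofReal_div_add_ofReal_re_lt {c t : ℝ} (hc : 0 < c) (ht : 0 < t) {ζ : ℂ} (hζ : 0 < ζ.re) :
    ((c : ℂ) / (ζ + t)).re < c / t :=
  calc ((c : ℂ) / (ζ + t)).re ≤ ‖(c : ℂ) / (ζ + t)‖ := re_le_norm _
    _ ≤ c / (ζ.re + t) := norm_ofReal_div_add_ofReal_le hc.le (by linarith)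
    _ < c / t := by gcongr; linarith

section Series

variable {c γ : ℕ → ℝ} {ζ : ℂ}

lemma summable_norm_ofReal_div_add (hc : ∀ k, 0 ≤ c k) (hγ : ∀ k, 0 < γ k) (hζ : 0 ≤ ζ.re)
    (hsum : Summable fun k => c k / γ k) :
    Summable fun k => ‖(c k : ℂ) / (ζ + γ k)‖ := by
  refine hsum.of_nonneg_of_le (fun k => norm_nonneg _) fun k => ?_
  calc ‖(c k : ℂ) / (ζ + γ k)‖ ≤ c k / (ζ.re + γ k) :=
        norm_ofReal_div_add_ofReal_le (hc k) (by linarith [hγ k])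
    _ ≤ c k / γ k := by gcongr; exacts [hc k, hγ k, by linarith]

lemma re_tsum_ofReal_div_add_lt (hc : ∀ k, 0 < c k) (hγ : ∀ k, 0 < γ k) (hζ : 0 < ζ.re)
    (hsum : Summable fun k => c k / γ k) :
    (∑' k, (c k : ℂ) / (ζ + γ k)).re < ∑' k, c k / γ k := by
  have hsum' : Summable fun k => (c k : ℂ) / (ζ + γ k) :=
    (summable_norm_ofReal_div_add (fun k => (hc k).le) hγ hζ.le hsum).of_norm
  have hlt k : ((c k : ℂ) / (ζ + γ k)).re < c k / γ k :=
    ofReal_div_add_ofReal_re_lt (hc k) (hγ k) hζ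
  rw [re_tsum hsum']
  exact Summable.tsum_lt_tsum (i := 0) (fun k => (hlt k).le) (hlt 0)
    (hasSum_re hsum'.hasSum).summable hsum

end Series

lemma sq_re_nonneg_of_abs_im_le {ζ : ℂ} (h : |ζ.im| ≤ ζ.re) : 0 ≤ (ζ ^ 2).re := by
  rw [sq, mul_re, ← sq, ← sq, sub_nonneg, ← sq_abs ζ.im]
  exact pow_le_pow_left₀ (abs_nonneg _) h 2

lemma Real.sq_mul_one_sub_rpow_neg_mul {a : ℝ} (ha : 0 < a) (ξ S : ℝ) :
    a ^ 2 * (1 - a ^ (-(2 * (1 - ξ))) * S) = a ^ 2 - a ^ (2 * ξ) * S := by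
  rw [mul_sub, mul_one, ← mul_assoc, ← Real.rpow_two, ← Real.rpow_add ha]
  ring_nf

lemma Real.rpow_neg_mul_lt_one {a p S : ℝ} (ha : 0 < a) (h : S < a ^ p) : a ^ (-p) * S < 1 := by
  rw [Real.rpow_neg ha.le]
  exact (inv_mul_lt_one₀ (Real.rpow_pos_of_pos ha p)).2 h

theorem stmt_4_general
    (c γs : ℕ → ℝ)
    (hc : ∀ j, 0 < c j)
    (hγ0 : 0 < γs 0)
    (hγmono : StrictMono γs)
    (hSsum : Summable fun j => c j / γs j)
    (a ξ : ℝ) (ha : 0 < a)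
    (ℓ : ℂ → ℂ)
    (hℓ : ∀ ζ, ℓ ζ = ζ ^ 2 + (a : ℂ) ^ 2
        - ((a ^ (2 * ξ) : ℝ) : ℂ) * ∑' k, (c k : ℂ) / (ζ + (γs k : ℂ))) :
    ∀ x y : ℝ, 0 < x → |y| ≤ x →
      (Summable fun k => ‖(c k : ℂ) / (((x : ℂ) + (y : ℂ) * Complex.I) + (γs k : ℂ))‖) ∧
      a ^ 2 - a ^ (2 * ξ) * (∑' j, c j / γs j) < (ℓ ((x : ℂ) + (y : ℂ) * Complex.I)).re ∧
      ((∑' j, c j / γs j) < a ^ (2 * (1 - ξ)) →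
        0 < a ^ 2 * (1 - a ^ (-(2 * (1 - ξ))) * ∑' j, c j / γs j) ∧
        a ^ 2 * (1 - a ^ (-(2 * (1 - ξ))) * ∑' j, c j / γs j)
          < ‖ℓ ((x : ℂ) + (y : ℂ) * Complex.I)‖) := by
  intro x y hx hy
  set ζ : ℂ := x + y * I
  have hζre : ζ.re = x := by simp [ζ]
  have hζim : ζ.im = y := by simp [ζ]
  have hγ k : 0 < γs k := hγ0.trans_le (hγmono.monotone k.zero_le)
  have hre : a ^ 2 - a ^ (2 * ξ) * (∑' j, c j / γs j) < (ℓ ζ).re := by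
    have hsq : 0 ≤ (ζ ^ 2).re := sq_re_nonneg_of_abs_im_le (by rwa [hζre, hζim])
    have hlt := re_tsum_ofReal_div_add_lt hc hγ (hζre ▸ hx) hSsum
    have hpow : (((a : ℂ) ^ 2)).re = a ^ 2 := by norm_cast
    rw [hℓ, sub_re, add_re, re_ofReal_mul, hpow]
    nlinarith [Real.rpow_pos_of_pos ha (2 * ξ)]
  refine ⟨summable_norm_ofReal_div_add (fun k => (hc k).le) hγ (hζre ▸ hx.le) hSsum, hre,
    fun hSa => ⟨?_, ?_⟩⟩
  · have hlt := Real.rpow_neg_mul_lt_one ha hSa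
    exact mul_pos (by positivity) (by linarith)
  · rw [Real.sq_mul_one_sub_rpow_neg_mul ha]
    exact hre.trans_le (re_le_norm _)

/-- Fix `a > 0` and `ξ ∈ [0,1]`. For every `ζ = x + iy` with `x > 0` and
`|y| ≤ x`, the series defining `ℓ_a ζ` converges absolutely and
`Re (ℓ_a (x+iy)) > a² - a^(2ξ) S`; in particular, if `a^(2(1-ξ)) > S`, then
`‖ℓ_a (x+iy)‖ > a² (1 - a^(-2(1-ξ)) S) > 0` for all such `ζ`, where `S = ∑ₖ c k / γ k`.
(Sequences are indexed by `ℕ`, so `c 0, γ 0` correspond to `c_1, γ_1`.) -/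
theorem stmt_4
    (c γs : ℕ → ℝ)
    (hc : ∀ j, 0 < c j)
    (hγ0 : 0 < γs 0)
    (hγmono : StrictMono γs)
    (hγtop : Filter.Tendsto γs Filter.atTop Filter.atTop)
    (hSsum : Summable fun j => c j / γs j)
    (hS : (∑' j, c j / γs j) < 1)
    (a ξ : ℝ) (ha : 0 < a) (hξ : ξ ∈ Set.Icc (0:ℝ) 1)
    (ℓ : ℂ → ℂ)
    (hℓ : ∀ ζ, ℓ ζ = ζ ^ 2 + (a : ℂ) ^ 2
        - ((a ^ (2 * ξ) : ℝ) : ℂ) * ∑' k, (c k : ℂ) / (ζ + (γs k : ℂ))) :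
    ∀ x y : ℝ, 0 < x → |y| ≤ x →
      (Summable fun k => ‖(c k : ℂ) / (((x : ℂ) + (y : ℂ) * Complex.I) + (γs k : ℂ))‖) ∧
      a ^ 2 - a ^ (2 * ξ) * (∑' j, c j / γs j) < (ℓ ((x : ℂ) + (y : ℂ) * Complex.I)).re ∧
      ((∑' j, c j / γs j) < a ^ (2 * (1 - ξ)) →
        0 < a ^ 2 * (1 - a ^ (-(2 * (1 - ξ))) * ∑' j, c j / γs j) ∧
        a ^ 2 * (1 - a ^ (-(2 * (1 - ξ))) * ∑' j, c j / γs j)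
          < ‖ℓ ((x : ℂ) + (y : ℂ) * Complex.I)‖) :=
  stmt_4_general c γs hc hγ0 hγmono hSsum a ξ ha ℓ hℓ
end

section
/- Let γ ≥ 0 and let φ be a measurable complex-valued function on the half-plane {ζ ∈ ℂ : Re ζ > γ} such that sup_{x > γ} ∫_{−∞}^{+∞} |φ(x + iy)|² dy < +∞. Then for every η > γ there exists a sequence (η_k) of positive reals with η_k → +∞ such that both ∫_γ^η |φ(x + i η_k)|² dx → 0 and ∫_γ^η |φ(x − i η_k)|² dx → 0 as k → ∞. -/
/-!
By Tonelli, `y ↦ ∫_γ^η |φ(x + iy)|² dx` has integral at most `(η - γ) M` over `ℝ`, and so does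
its reflection `y ↦ ∫_γ^η |φ(x - iy)|² dx`. A nonnegative function of finite integral cannot stay
above a fixed `ε > 0` on a half-line `(k, ∞)`, which has infinite measure; choosing a point
`ηₖ > k` where the sum of the two functions is below `1 / k` gives the sequence.
-/

open scoped ENNReal Topology
open MeasureTheory Set Filter

section

variable {α β : Type*} [MeasurableSpace α] [MeasurableSpace β]

theorem exists_mem_lt_of_lintegral_ne_top {μ : Measure α} {g : α → ℝ≥0∞}
    (hg : ∫⁻ a, g a ∂μ ≠ ⊤) {s : Set α} (hs : MeasurableSet s) (hμs : μ s = ⊤)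
    {ε : ℝ≥0∞} (hε : ε ≠ 0) : ∃ a ∈ s, g a < ε := by
  by_contra! hge
  refine hg (eq_top_mono ?_ (ENNReal.mul_eq_top.2 (Or.inl ⟨hε, hμs⟩)))
  calc ε * μ s = ∫⁻ _ in s, ε ∂μ := (setLIntegral_const s ε).symm
    _ ≤ ∫⁻ a in s, g a ∂μ := setLIntegral_mono' hs hge
    _ ≤ ∫⁻ a, g a ∂μ := setLIntegral_le_lintegral s g

theorem lintegral_setLIntegral_le {μ : Measure α} {ν : Measure β} [SFinite μ] [SFinite ν]
    {F : α → β → ℝ≥0∞} (hF : Measurable (Function.uncurry F)) {s : Set α}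
    (hs : MeasurableSet s) {M : ℝ≥0∞} (hM : ∀ x ∈ s, ∫⁻ y, F x y ∂ν ≤ M) :
    ∫⁻ y, ∫⁻ x in s, F x y ∂μ ∂ν ≤ μ s * M := by
  rw [← lintegral_lintegral_swap (μ := μ.restrict s) hF.aemeasurable]
  calc ∫⁻ x in s, ∫⁻ y, F x y ∂ν ∂μ ≤ ∫⁻ _ in s, M ∂μ := setLIntegral_mono' hs hM
    _ = μ s * M := by rw [setLIntegral_const, mul_comm]

end

theorem Real.exists_seq_gt_tendsto_zero_of_lintegral_ne_top {g : ℝ → ℝ≥0∞}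
    (hg : ∫⁻ y, g y ≠ ⊤) :
    ∃ y : ℕ → ℝ, (∀ k : ℕ, (k : ℝ) < y k) ∧ Tendsto (g ∘ y) atTop (𝓝 0) := by
  have hpt (k : ℕ) : ∃ y ∈ Ioi (k : ℝ), g y < (k : ℝ≥0∞)⁻¹ :=
    exists_mem_lt_of_lintegral_ne_top hg measurableSet_Ioi Real.volume_Ioi
      (ENNReal.inv_ne_zero.2 (ENNReal.natCast_ne_top k))
  choose y hy_gt hy_lt using hpt
  exact ⟨y, hy_gt,
    tendsto_nhds_bot_mono' ENNReal.tendsto_inv_nat_nhds_zero fun k => (hy_lt k).le⟩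

theorem stmt_6_general
    (γ : ℝ)
    (φ : ℂ → ℂ) (hφ : Measurable φ)
    (M : ℝ≥0∞) (hM : M ≠ ⊤)
    (hbound : ∀ x : ℝ, γ < x →
      (∫⁻ y : ℝ, (‖φ ((x : ℂ) + (y : ℂ) * Complex.I)‖₊ : ℝ≥0∞) ^ 2) ≤ M) :
    ∀ η : ℝ, γ < η → ∃ ηk : ℕ → ℝ,
      (∀ k, 0 < ηk k) ∧
      Filter.Tendsto ηk Filter.atTop Filter.atTop ∧
      Filter.Tendsto
        (fun k => ∫⁻ x in Set.Ioc γ η,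
          (‖φ ((x : ℂ) + ((ηk k : ℝ) : ℂ) * Complex.I)‖₊ : ℝ≥0∞) ^ 2)
        Filter.atTop (nhds 0) ∧
      Filter.Tendsto
        (fun k => ∫⁻ x in Set.Ioc γ η,
          (‖φ ((x : ℂ) - ((ηk k : ℝ) : ℂ) * Complex.I)‖₊ : ℝ≥0∞) ^ 2)
        Filter.atTop (nhds 0) := by
  intro η _
  set f : ℝ → ℝ≥0∞ := fun y =>
    ∫⁻ x in Ioc γ η, (‖φ ((x : ℂ) + (y : ℂ) * Complex.I)‖₊ : ℝ≥0∞) ^ 2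
  have hF : Measurable fun p : ℝ × ℝ =>
      (‖φ ((p.1 : ℂ) + (p.2 : ℂ) * Complex.I)‖₊ : ℝ≥0∞) ^ 2 := by
    fun_prop
  have hf_le : ∫⁻ y, f y ≤ volume (Ioc γ η) * M :=
    lintegral_setLIntegral_le hF measurableSet_Ioc fun x hx => hbound x hx.1
  have hf_ne_top : ∫⁻ y, f y ≠ ⊤ :=
    ne_top_of_le_ne_top (ENNReal.mul_ne_top (by simp [Real.volume_Ioc]) hM) hf_le
  have hsum : ∫⁻ y, (f y + f (-y)) ≠ ⊤ := by
    rw [lintegral_add_left hF.lintegral_prod_left', lintegral_neg_eq_self]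
    exact ENNReal.add_ne_top.2 ⟨hf_ne_top, hf_ne_top⟩
  obtain ⟨y, hy_gt, hy_lim⟩ := Real.exists_seq_gt_tendsto_zero_of_lintegral_ne_top hsum
  have hneg (k : ℕ) (x : ℝ) :
      (x : ℂ) - (y k : ℂ) * Complex.I = x + ((-y k : ℝ) : ℂ) * Complex.I := by
    push_cast; ring
  refine ⟨y, fun k => (Nat.cast_nonneg k).trans_lt (hy_gt k),
    tendsto_atTop_mono (fun k => (hy_gt k).le) tendsto_natCast_atTop_atTop,
    tendsto_nhds_bot_mono' hy_lim fun k => le_self_add,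
    tendsto_nhds_bot_mono' hy_lim fun k => ?_⟩
  simp only [hneg]
  exact le_add_self

/-- If `φ` is measurable on the half-plane `Re ζ > γ` and
`sup_{x>γ} ∫ |φ(x+iy)|² dy < ∞`, then for every `η > γ` there is a sequence `ηₖ → +∞` of
positive reals with `∫_γ^η |φ(x ± i ηₖ)|² dx → 0`. -/
theorem stmt_6
    (γ : ℝ) (hγ : 0 ≤ γ)
    (φ : ℂ → ℂ) (hφ : Measurable φ)
    (M : ℝ≥0∞) (hM : M ≠ ⊤)
    (hbound : ∀ x : ℝ, γ < x →
      (∫⁻ y : ℝ, (‖φ ((x : ℂ) + (y : ℂ) * Complex.I)‖₊ : ℝ≥0∞) ^ 2) ≤ M) :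
    ∀ η : ℝ, γ < η → ∃ ηk : ℕ → ℝ,
      (∀ k, 0 < ηk k) ∧
      Filter.Tendsto ηk Filter.atTop Filter.atTop ∧
      Filter.Tendsto
        (fun k => ∫⁻ x in Set.Ioc γ η,
          (‖φ ((x : ℂ) + ((ηk k : ℝ) : ℂ) * Complex.I)‖₊ : ℝ≥0∞) ^ 2)
        Filter.atTop (nhds 0) ∧
      Filter.Tendsto
        (fun k => ∫⁻ x in Set.Ioc γ η,
          (‖φ ((x : ℂ) - ((ηk k : ℝ) : ℂ) * Complex.I)‖₊ : ℝ≥0∞) ^ 2)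
        Filter.atTop (nhds 0) :=
  stmt_6_general γ φ hφ M hM hbound
end

section
/- For every k ∈ {2, …, N}, letting x_k denote the unique zero of f_{a,N} in (−γ_k, −γ_{k−1}), the function ℓ_{a,N} has a real zero μ_k with −γ_k < μ_k < x_k < −γ_{k−1}. Moreover, if a^{2(1−ξ)} > ∑_{k=1}^N c_k/γ_k, then, with x_1 the unique zero of f_{a,N} in (−γ_1, 0), ℓ_{a,N} has a real zero μ_1 with −γ_1 < μ_1 < x_1 < 0. -/
lemma stmt10_aux
    (N : ℕ) (c γs : ℕ → ℝ)
    (hc : ∀ k, k < N → 0 < c k)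
    (hγmono : ∀ i j : ℕ, i < j → j < N → γs i < γs j)
    (a ξ : ℝ) (ha : 0 < a)
    (f : ℝ → ℝ)
    (hf : ∀ x, f x = 1 - a ^ (-(2 * (1 - ξ))) * ∑ k ∈ Finset.range N, c k / (x + γs k))
    (ℓ : ℝ → ℝ)
    (hℓ : ∀ x, ℓ x = x ^ 2 + a ^ 2 - a ^ (2 * ξ) * ∑ k ∈ Finset.range N, c k / (x + γs k))
    (k : ℕ) (hk : k < N) (xk : ℝ)
    (h1 : -γs k < xk) (h2 : xk < 0)
    (h3 : ∀ j, j < k → xk < -γs j)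
    (hfx : f xk = 0) :
    ∃ μ : ℝ, -γs k < μ ∧ μ < xk ∧ ℓ μ = 0 := by
  -- value of the sum at xk, hence ℓ xk = xk ^ 2 > 0
  have hS : (∑ j ∈ Finset.range N, c j / (xk + γs j)) = a ^ (2 * (1 - ξ)) := by
    have h0 := hf xk
    rw [hfx] at h0
    have h' : a ^ (-(2 * (1 - ξ))) * ∑ j ∈ Finset.range N, c j / (xk + γs j) = 1 := by
      linarith
    have hmul : a ^ (2 * (1 - ξ)) * a ^ (-(2 * (1 - ξ))) = 1 := by
      rw [← Real.rpow_add ha]; norm_num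
    calc (∑ j ∈ Finset.range N, c j / (xk + γs j))
        = a ^ (2 * (1 - ξ)) * (a ^ (-(2 * (1 - ξ))) *
            ∑ j ∈ Finset.range N, c j / (xk + γs j)) := by
          rw [← mul_assoc, hmul, one_mul]
      _ = a ^ (2 * (1 - ξ)) := by rw [h']; ring
  have hℓxk : ℓ xk = xk ^ 2 := by
    rw [hℓ, hS, ← Real.rpow_add ha]
    have he : 2 * ξ + 2 * (1 - ξ) = 2 := by ring
    rw [he]
    have h2' : a ^ (2:ℝ) = a ^ (2:ℕ) := by
      rw [← Real.rpow_natCast]; norm_num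
    rw [h2']; ring
  have hℓxkpos : 0 < ℓ xk := by
    rw [hℓxk]; have hne : xk ≠ 0 := ne_of_lt h2; positivity
  -- Tendsto ℓ (𝓝[>] (-γs k)) atBot
  set L := nhdsWithin (-γs k) (Set.Ioi (-γs k)) with hLdef
  have hsumtop : Filter.Tendsto (fun x => ∑ j ∈ Finset.range N, c j / (x + γs j))
      L Filter.atTop := by
    have hsplit : ∀ x : ℝ, (∑ j ∈ Finset.range N, c j / (x + γs j))
        = (∑ j ∈ (Finset.range N).erase k, c j / (x + γs j)) + c k / (x + γs k) := by
      intro x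
      rw [Finset.sum_erase_add _ _ (Finset.mem_range.mpr hk)]
    simp only [hsplit]
    apply Filter.Tendsto.add_atTop
    · -- finite part tends to a limit
      apply tendsto_finset_sum
      intro j hj
      have hjN : j < N := Finset.mem_range.mp (Finset.mem_of_mem_erase hj)
      have hjk : j ≠ k := Finset.ne_of_mem_erase hj
      have hden : (-γs k) + γs j ≠ 0 := by
        rcases lt_or_gt_of_ne hjk with h | h
        · have := hγmono j k h hk; intro hcon; linarith
        · have := hγmono k j h hjN; intro hcon; linarith
      have hcont : ContinuousAt (fun x : ℝ => c j / (x + γs j)) (-γs k) := by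
        apply ContinuousAt.div
        · exact continuousAt_const
        · exact (continuous_id.add continuous_const).continuousAt
        · simpa using hden
      exact hcont.continuousWithinAt.tendsto
    · -- pole term tends to atTop
      have h0 : Filter.Tendsto (fun x : ℝ => x + γs k) L (nhdsWithin 0 (Set.Ioi 0)) := by
        apply tendsto_nhdsWithin_of_tendsto_nhds_of_eventually_within
        · have : Filter.Tendsto (fun x : ℝ => x + γs k) (nhds (-γs k))
              (nhds (-γs k + γs k)) :=
            (continuous_id.add continuous_const).tendsto _
          rw [neg_add_cancel] at this
          exact this.mono_left nhdsWithin_le_nhds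
        · filter_upwards [self_mem_nhdsWithin] with x hx
          simp only [Set.mem_Ioi] at hx ⊢
          linarith
      have hinv : Filter.Tendsto (fun x : ℝ => (x + γs k)⁻¹) L Filter.atTop :=
        tendsto_inv_nhdsGT_zero.comp h0
      have := hinv.const_mul_atTop (hc k hk)
      simpa [div_eq_mul_inv] using this
  have hℓbot : Filter.Tendsto ℓ L Filter.atBot := by
    have hfun : ℓ = fun x => (x ^ 2 + a ^ 2) +
        (-(a ^ (2 * ξ) * ∑ j ∈ Finset.range N, c j / (x + γs j))) := by
      funext x; rw [hℓ x]; ring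
    rw [hfun]
    apply Filter.Tendsto.add_atBot
    · have : Filter.Tendsto (fun x : ℝ => x ^ 2 + a ^ 2) (nhds (-γs k))
          (nhds ((-γs k) ^ 2 + a ^ 2)) :=
        ((continuous_pow 2).add continuous_const).tendsto _
      exact this.mono_left nhdsWithin_le_nhds
    · have hpos : 0 < a ^ (2 * ξ) := Real.rpow_pos_of_pos ha _
      exact Filter.tendsto_neg_atBot_iff.mpr (hsumtop.const_mul_atTop hpos)
  -- pick t ∈ (-γs k, xk) with ℓ t < 0
  have hne : L.NeBot := by
    rw [hLdef]; exact nhdsGT_neBot _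
  have hev : ∀ᶠ x in L, ℓ x < 0 ∧ x ∈ Set.Ioo (-γs k) xk := by
    refine Filter.Eventually.and ?_ ?_
    · exact hℓbot.eventually (Filter.eventually_lt_atBot 0)
    · exact Ioo_mem_nhdsGT_of_mem ⟨le_refl _, h1⟩
  obtain ⟨t, hℓt, ht⟩ := hev.exists
  -- no poles on [t, xk]
  have hnopole : ∀ x ∈ Set.Icc t xk, ∀ j, j < N → x + γs j ≠ 0 := by
    intro x hx j hjN
    rcases lt_or_ge j k with hjk | hjk
    · have : x + γs j < 0 := by
        have := h3 j hjk
        have := hx.2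
        linarith
      linarith [this]
    · have hγ : γs k ≤ γs j := by
        rcases eq_or_lt_of_le hjk with h | h
        · rw [h]
        · exact le_of_lt (hγmono k j h hjN)
      have : 0 < x + γs j := by
        have := hx.1
        have := ht.1
        linarith
      linarith [this]
  have hcont : ContinuousOn ℓ (Set.Icc t xk) := by
    have hfun : ℓ = fun x => x ^ 2 + a ^ 2 -
        a ^ (2 * ξ) * ∑ j ∈ Finset.range N, c j / (x + γs j) := funext hℓ
    rw [hfun]
    apply ContinuousOn.sub
    · exact ((continuous_pow 2).add continuous_const).continuousOn
    · apply ContinuousOn.mul continuousOn_const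
      apply continuousOn_finset_sum
      intro j hj
      apply ContinuousOn.div continuousOn_const
      · exact (continuous_id.add continuous_const).continuousOn
      · intro x hx
        exact hnopole x hx j (Finset.mem_range.mp hj)
  have htle : t ≤ xk := le_of_lt ht.2
  have h0mem : (0:ℝ) ∈ Set.Icc (ℓ t) (ℓ xk) := ⟨le_of_lt hℓt, le_of_lt hℓxkpos⟩
  obtain ⟨μ, hμmem, hμ⟩ := intermediate_value_Icc htle hcont h0mem
  refine ⟨μ, ?_, ?_, hμ⟩
  · exact lt_of_lt_of_le ht.1 hμmem.1
  · rcases eq_or_lt_of_le hμmem.2 with h | h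
    · exfalso; rw [h] at hμ; linarith
    · exact h


/-- With `f_{a,N}` and `ℓ_{a,N}(x) = x² + a² f_{a,N}(x)` as in the context:
for every `k ∈ {2,…,N}` (here `1 ≤ k < N`, `0`-based) and `x_k` the (unique) zero of
`f_{a,N}` in `(-γ k, -γ (k-1))`, the function `ℓ_{a,N}` has a real zero `μ_k` with
`-γ k < μ_k < x_k < -γ (k-1)`; moreover, if `a^(2(1-ξ)) > ∑_{k<N} c k / γ k`, then with
`x_1` the unique zero of `f_{a,N}` in `(-γ 0, 0)`, `ℓ_{a,N}` has a real zero `μ_1` with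
`-γ 0 < μ_1 < x_1 < 0`. (Indexing is `0`-based: `c 0, γ 0` correspond to `c_1, γ_1`.) -/
theorem stmt_10
    (N : ℕ) (hN : 1 ≤ N) (c γs : ℕ → ℝ)
    (hc : ∀ k, k < N → 0 < c k)
    (hγ0 : 0 < γs 0)
    (hγmono : ∀ i j : ℕ, i < j → j < N → γs i < γs j)
    (a ξ : ℝ) (ha : 0 < a) (hξ : ξ ∈ Set.Icc (0:ℝ) 1)
    (f : ℝ → ℝ)
    (hf : ∀ x, f x = 1 - a ^ (-(2 * (1 - ξ))) * ∑ k ∈ Finset.range N, c k / (x + γs k))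
    (ℓ : ℝ → ℝ)
    (hℓ : ∀ x, ℓ x = x ^ 2 + a ^ 2 - a ^ (2 * ξ) * ∑ k ∈ Finset.range N, c k / (x + γs k)) :
    (∀ k : ℕ, 1 ≤ k → k < N →
      ∀ xk : ℝ, xk ∈ Set.Ioo (-γs k) (-γs (k - 1)) → f xk = 0 →
        ∃ μ : ℝ, -γs k < μ ∧ μ < xk ∧ ℓ μ = 0) ∧
    ((∑ k ∈ Finset.range N, c k / γs k) < a ^ (2 * (1 - ξ)) →
      ∀ x1 : ℝ, x1 ∈ Set.Ioo (-γs 0) 0 → f x1 = 0 →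
        ∃ μ : ℝ, -γs 0 < μ ∧ μ < x1 ∧ ℓ μ = 0) := by
  constructor
  · intro k hk1 hkN xk hxk hfx
    have hk1N : k - 1 < N := lt_of_le_of_lt (Nat.sub_le k 1) hkN
    have hγk1pos : 0 < γs (k - 1) := by
      rcases Nat.eq_zero_or_pos (k - 1) with h | h
      · rw [h]; exact hγ0
      · exact lt_trans hγ0 (hγmono 0 (k - 1) h hk1N)
    apply stmt10_aux N c γs hc hγmono a ξ ha f hf ℓ hℓ k hkN xk hxk.1
    · linarith [hxk.2]
    · intro j hj
      have hjk1 : j ≤ k - 1 := Nat.le_sub_one_of_lt hj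
      rcases eq_or_lt_of_le hjk1 with h | h
      · rw [h]; exact hxk.2
      · have := hγmono j (k - 1) h hk1N
        linarith [hxk.2]
    · exact hfx
  · intro _ x1 hx1 hfx
    apply stmt10_aux N c γs hc hγmono a ξ ha f hf ℓ hℓ 0 hN x1 hx1.1 hx1.2
    · intro j hj; exact absurd hj (Nat.not_lt_zero j)
    · exact hfx
end

section
/- Fix ξ ∈ [0, 1/2). There exist constants C > 0 and A₀ > 0 such that for every a > A₀ the function ℓ_{a,N} has a zero μ⁺(a) in the upper half-plane satisfying |Re μ⁺(a) + (1/2) a^{−2(1−ξ)} ∑_{j=1}^N c_j| ≤ C a^{−2(1−ξ)} and |Im μ⁺(a) − a| ≤ C a^{−(1−2ξ)}; moreover the complex conjugate of μ⁺(a) is also a zero of ℓ_{a,N}. -/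
/-!
Since `ζ² + a² = (ζ - i a)(ζ + i a)`, the zeros of `ℓ_{a,N}` near `i a` are the fixed points of
`T ζ = i a + a^{2ξ} S(ζ) / (ζ + i a)`, where `S(ζ) = ∑ c_k / (ζ + γ_k)`. On the half-plane
`Im ζ ≥ a/2` one has `|S| ≤ 2K/a` and `|S'| ≤ 4K/a²` with `K = ∑ |c_k|`, so `T` maps the disc of
radius `2K a^{2ξ-2}` about `i a` into itself and contracts it with constant `6K a^{2ξ-3} ≤ 1/2`
once `a` is large (`ξ < 1/2` gives `a^{2ξ} ≤ a`). The fixed point `μ⁺(a)` lies within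
`2K a^{-2(1-ξ)}` of `i a`, which gives both estimates; since the `c_k, γ_k` are real,
`conj μ⁺(a)` is a zero as well.
-/

open Complex Metric Set
open scoped ComplexConjugate

section StieltjesSum

variable {ι : Type*} (s : Finset ι) (c γ : ι → ℝ)

noncomputable def stieltjesSum (ζ : ℂ) : ℂ :=
  ∑ k ∈ s, (c k : ℂ) / (ζ + γ k)

lemma stieltjesSum_conj (ζ : ℂ) :
    stieltjesSum s c γ (conj ζ) = conj (stieltjesSum s c γ ζ) := by
  simp [stieltjesSum]

lemma im_le_norm_add_ofReal (ζ : ℂ) (x : ℝ) : ζ.im ≤ ‖ζ + x‖ := by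
  simpa using im_le_norm (ζ + x)

variable {s c γ}

lemma norm_stieltjesSum_le {m : ℝ} (hm : 0 < m) {ζ : ℂ} (hζ : m ≤ ζ.im) :
    ‖stieltjesSum s c γ ζ‖ ≤ (∑ k ∈ s, |c k|) / m := by
  rw [Finset.sum_div]
  refine (norm_sum_le _ _).trans (Finset.sum_le_sum fun k _ => ?_)
  rw [norm_div, norm_real, Real.norm_eq_abs]
  exact div_le_div_of_nonneg_left (abs_nonneg _) hm (hζ.trans (im_le_norm_add_ofReal ζ _))

lemma norm_stieltjesSum_sub_le {m : ℝ} (hm : 0 < m) {x y : ℂ} (hx : m ≤ x.im) (hy : m ≤ y.im) :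
    ‖stieltjesSum s c γ x - stieltjesSum s c γ y‖ ≤ (∑ k ∈ s, |c k|) / m ^ 2 * ‖x - y‖ := by
  rw [stieltjesSum, stieltjesSum, ← Finset.sum_sub_distrib, Finset.sum_div, Finset.sum_mul]
  refine (norm_sum_le _ _).trans (Finset.sum_le_sum fun k _ => ?_)
  have hxk : m ≤ ‖x + γ k‖ := hx.trans (im_le_norm_add_ofReal x _)
  have hyk : m ≤ ‖y + γ k‖ := hy.trans (im_le_norm_add_ofReal y _)
  have hxk0 : x + γ k ≠ 0 := norm_pos_iff.mp (hm.trans_le hxk)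
  have hyk0 : y + γ k ≠ 0 := norm_pos_iff.mp (hm.trans_le hyk)
  have hdiff : (c k : ℂ) / (x + γ k) - c k / (y + γ k)
      = c k * (y - x) / ((x + γ k) * (y + γ k)) := by
    field_simp
    ring
  rw [hdiff, norm_div, norm_mul, norm_mul, norm_real, Real.norm_eq_abs, norm_sub_rev y x,
    div_mul_eq_mul_div, sq]
  gcongr

end StieltjesSum

section RootMap

variable {ι : Type*} (s : Finset ι) (c γ : ι → ℝ) (a R : ℝ)

noncomputable def stieltjesRootMap (ζ : ℂ) : ℂ :=
  I * a + R * stieltjesSum s c γ ζ / (ζ + I * a)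

variable {a}

lemma sub_le_im_of_mem_closedBall {r : ℝ} {ζ : ℂ} (hζ : ζ ∈ closedBall (I * a) r) :
    a - r ≤ ζ.im := by
  have h := (abs_im_le_norm (ζ - I * a)).trans (mem_closedBall_iff_norm.mp hζ)
  simp only [sub_im, mul_im, I_re, ofReal_im, mul_zero, I_im, ofReal_re, one_mul, zero_add] at h
  linarith [neg_abs_le (ζ.im - a)]

lemma le_norm_add_I_mul {ζ : ℂ} (hζ : 0 ≤ ζ.im) : a ≤ ‖ζ + I * a‖ := by
  have h := im_le_norm (ζ + I * a)
  simp only [add_im, mul_im, I_re, ofReal_im, mul_zero, I_im, ofReal_re, one_mul, zero_add] at h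
  linarith

lemma half_le_im_of_mem_closedBall {ζ : ℂ} (hζ : ζ ∈ closedBall (I * a) (a / 2)) :
    a / 2 ≤ ζ.im := by
  linarith [sub_le_im_of_mem_closedBall hζ]

variable {s c γ R}

lemma mapsTo_stieltjesRootMap (ha : 0 < a) (hR : 0 ≤ R) :
    MapsTo (stieltjesRootMap s c γ a R) (closedBall (I * a) (a / 2))
      (closedBall (I * a) (2 * (∑ k ∈ s, |c k|) * R / a ^ 2)) := by
  intro ζ hζ
  have him := half_le_im_of_mem_closedBall hζ
  rw [mem_closedBall_iff_norm, stieltjesRootMap, add_sub_cancel_left, norm_div, norm_mul,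
    norm_real, Real.norm_eq_abs, abs_of_nonneg hR]
  calc R * ‖stieltjesSum s c γ ζ‖ / ‖ζ + I * a‖
      ≤ R * ((∑ k ∈ s, |c k|) / (a / 2)) / a := by
        gcongr
        · exact norm_stieltjesSum_le (by positivity) him
        · exact le_norm_add_I_mul (by linarith)
    _ = 2 * (∑ k ∈ s, |c k|) * R / a ^ 2 := by field_simp

lemma stieltjesRootMap_sub {x y : ℂ} (hx : x + I * a ≠ 0) (hy : y + I * a ≠ 0) :
    stieltjesRootMap s c γ a R x - stieltjesRootMap s c γ a R y
      = R * (stieltjesSum s c γ x - stieltjesSum s c γ y) / (x + I * a)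
        + R * stieltjesSum s c γ y * (y - x) / ((x + I * a) * (y + I * a)) := by
  simp only [stieltjesRootMap]
  field_simp
  ring

lemma lipschitzOnWith_stieltjesRootMap (ha : 0 < a) (hR : 0 ≤ R)
    (hsmall : 12 * (∑ k ∈ s, |c k|) * R ≤ a ^ 3) :
    LipschitzOnWith (1 / 2) (stieltjesRootMap s c γ a R) (closedBall (I * a) (a / 2)) := by
  refine LipschitzOnWith.of_dist_le_mul fun x hx y hy => ?_
  set K := ∑ k ∈ s, |c k|
  have hxim := half_le_im_of_mem_closedBall hx
  have hyim := half_le_im_of_mem_closedBall hy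
  have hxa : a ≤ ‖x + I * a‖ := le_norm_add_I_mul (by linarith)
  have hya : a ≤ ‖y + I * a‖ := le_norm_add_I_mul (by linarith)
  have hK : 0 ≤ K := Finset.sum_nonneg fun k _ => abs_nonneg (c k)
  rw [dist_eq_norm, dist_eq_norm, stieltjesRootMap_sub (norm_pos_iff.mp (ha.trans_le hxa))
    (norm_pos_iff.mp (ha.trans_le hya))]
  refine (norm_add_le _ _).trans ?_
  rw [norm_div, norm_div, norm_mul, norm_mul, norm_mul, norm_mul, norm_real, Real.norm_eq_abs,
    abs_of_nonneg hR, norm_sub_rev y x]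
  calc R * ‖stieltjesSum s c γ x - stieltjesSum s c γ y‖ / ‖x + I * a‖
        + R * ‖stieltjesSum s c γ y‖ * ‖x - y‖ / (‖x + I * a‖ * ‖y + I * a‖)
      ≤ R * (K / (a / 2) ^ 2 * ‖x - y‖) / a + R * (K / (a / 2)) * ‖x - y‖ / (a * a) := by
        gcongr
        · exact norm_stieltjesSum_sub_le (by positivity) hxim hyim
        · exact norm_stieltjesSum_le (by positivity) hyim
    _ = 6 * K * R / a ^ 3 * ‖x - y‖ := by field_simp; ring
    _ ≤ ↑(1 / 2 : NNReal) * ‖x - y‖ := by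
        gcongr
        rw [div_le_iff₀ (by positivity)]
        norm_num
        linarith

theorem exists_root_sq_add_sq_sub_stieltjesSum (ha : 0 < a) (hR : 0 ≤ R)
    (hsmall : 12 * (∑ k ∈ s, |c k|) * R ≤ a ^ 3) :
    ∃ μ ∈ closedBall (I * a) (2 * (∑ k ∈ s, |c k|) * R / a ^ 2),
      μ ^ 2 + a ^ 2 - R * stieltjesSum s c γ μ = 0 := by
  have hK : 0 ≤ ∑ k ∈ s, |c k| := Finset.sum_nonneg fun k _ => abs_nonneg (c k)
  have hr : 2 * (∑ k ∈ s, |c k|) * R / a ^ 2 ≤ a / 2 := by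
    rw [div_le_iff₀ (by positivity)]
    nlinarith [mul_nonneg hK hR]
  have hball := closedBall_subset_closedBall (x := I * a) hr
  have hmaps := (mapsTo_stieltjesRootMap (s := s) (c := c) (γ := γ) ha hR).mono_left hball
  have hlip := (lipschitzOnWith_stieltjesRootMap (γ := γ) ha hR hsmall).mono hball
  obtain ⟨μ, hμ, hfix, -⟩ := ContractingWith.exists_fixedPoint' isClosed_closedBall.isComplete
    hmaps ⟨by norm_num, hlip.mapsToRestrict hmaps⟩ (mem_closedBall_self (by positivity))
    (edist_ne_top _ _)
  refine ⟨μ, hμ, ?_⟩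
  have hμa : μ + I * a ≠ 0 := by
    have him := half_le_im_of_mem_closedBall (hball hμ)
    exact norm_pos_iff.mp (ha.trans_le (le_norm_add_I_mul (by linarith)))
  have hquot : R * stieltjesSum s c γ μ / (μ + I * a) = μ - I * a :=
    eq_sub_iff_add_eq'.mpr hfix
  rw [div_eq_iff hμa] at hquot
  linear_combination -hquot + (a : ℂ) ^ 2 * I_sq

end RootMap

lemma rpow_neg_two_mul_one_sub {a : ℝ} (ha : 0 < a) (ξ : ℝ) :
    a ^ (-(2 * (1 - ξ))) = a ^ (2 * ξ) / a ^ 2 := by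
  rw [show -(2 * (1 - ξ)) = 2 * ξ - (2 : ℕ) by push_cast; ring, Real.rpow_sub ha,
    Real.rpow_natCast]

theorem exists_root_rpow_stieltjesSum {ι : Type*} {s : Finset ι} {c : ι → ℝ} (γ : ι → ℝ)
    {ξ a : ℝ} (hξ : ξ ≤ 1 / 2) (ha : 12 * (∑ k ∈ s, |c k|) + 1 < a) :
    ∃ μ : ℂ, μ ^ 2 + a ^ 2 - (a ^ (2 * ξ) : ℝ) * stieltjesSum s c γ μ = 0 ∧ 0 < μ.im ∧
      ‖μ - I * a‖ ≤ 2 * (∑ k ∈ s, |c k|) * a ^ (-(2 * (1 - ξ))) := by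
  set K := ∑ k ∈ s, |c k|
  have hK : 0 ≤ K := Finset.sum_nonneg fun k _ => abs_nonneg (c k)
  have ha1 : 1 < a := by linarith
  have ha0 : 0 < a := by linarith
  set R := a ^ (2 * ξ)
  have hR : 0 ≤ R := Real.rpow_nonneg ha0.le _
  have hRa : R ≤ a := by
    simpa using Real.rpow_le_rpow_of_exponent_le ha1.le (by linarith : 2 * ξ ≤ 1)
  have hsmall : 12 * K * R ≤ a ^ 3 :=
    calc 12 * K * R ≤ a * a := by gcongr; linarith
      _ ≤ a ^ 3 := by nlinarith
  obtain ⟨μ, hμ, hroot⟩ := exists_root_sq_add_sq_sub_stieltjesSum (γ := γ) ha0 hR hsmall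
  have hr : 2 * K * R / a ^ 2 < a := by
    rw [div_lt_iff₀ (by positivity)]
    nlinarith
  refine ⟨μ, hroot, by linarith [sub_le_im_of_mem_closedBall hμ], ?_⟩
  rw [rpow_neg_two_mul_one_sub ha0 ξ, mul_div_assoc', ← mem_closedBall_iff_norm]
  exact hμ

theorem stmt_11_general
    (N : ℕ) (c γs : ℕ → ℝ)
    (ξ : ℝ) (hξ1 : ξ < 1 / 2)
    (ℓ : ℝ → ℂ → ℂ)
    (hℓ : ∀ a : ℝ, ∀ ζ : ℂ, ℓ a ζ = ζ ^ 2 + (a : ℂ) ^ 2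
        - ((a ^ (2 * ξ) : ℝ) : ℂ) * ∑ k ∈ Finset.range N, (c k : ℂ) / (ζ + (γs k : ℂ))) :
    ∃ C : ℝ, 0 < C ∧ ∃ A₀ : ℝ, 0 < A₀ ∧ ∀ a : ℝ, A₀ < a →
      ∃ μ : ℂ, ℓ a μ = 0 ∧ 0 < μ.im ∧
        |μ.re + (1 / 2) * a ^ (-(2 * (1 - ξ))) * ∑ j ∈ Finset.range N, c j|
          ≤ C * a ^ (-(2 * (1 - ξ))) ∧
        |μ.im - a| ≤ C * a ^ (-(1 - 2 * ξ)) ∧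
        ℓ a ((starRingEnd ℂ) μ) = 0 := by
  set K := ∑ j ∈ Finset.range N, |c j|
  have hK : 0 ≤ K := Finset.sum_nonneg fun j _ => abs_nonneg (c j)
  refine ⟨3 * K + 1, by positivity, 12 * K + 1, by positivity, fun a ha => ?_⟩
  obtain ⟨μ, hroot, him_pos, hdist⟩ := exists_root_rpow_stieltjesSum γs hξ1.le ha
  set X := a ^ (-(2 * (1 - ξ)))
  have hX : 0 ≤ X := Real.rpow_nonneg (by linarith) _
  have hre : |μ.re| ≤ 2 * K * X := by simpa using (abs_re_le_norm (μ - I * a)).trans hdist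
  have him : |μ.im - a| ≤ 2 * K * X := by simpa using (abs_im_le_norm (μ - I * a)).trans hdist
  have hℓa : ∀ ζ,
      ℓ a ζ = ζ ^ 2 + a ^ 2 - (a ^ (2 * ξ) : ℝ) * stieltjesSum (Finset.range N) c γs ζ :=
    hℓ a
  refine ⟨μ, (hℓa μ).trans hroot, him_pos, ?_, ?_, ?_⟩
  · calc |μ.re + 1 / 2 * X * ∑ j ∈ Finset.range N, c j|
        ≤ |μ.re| + 1 / 2 * X * K := by
          grw [abs_add_le, abs_mul, abs_of_nonneg (by positivity : 0 ≤ 1 / 2 * X),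
            Finset.abs_sum_le_sum_abs]
      _ ≤ (3 * K + 1) * X := by nlinarith
  · calc |μ.im - a| ≤ (3 * K + 1) * X := by nlinarith
      _ ≤ (3 * K + 1) * a ^ (-(1 - 2 * ξ)) := by
          gcongr
          exact Real.rpow_le_rpow_of_exponent_le (by linarith) (by linarith)
  · calc ℓ a (conj μ)
        = conj (μ ^ 2 + a ^ 2 - (a ^ (2 * ξ) : ℝ) * stieltjesSum (Finset.range N) c γs μ) := by
          rw [hℓa, stieltjesSum_conj]
          simp
      _ = 0 := by rw [hroot, map_zero]

/-- Fix `ξ ∈ [0, 1/2)`. There are `C > 0` and `A₀ > 0` such that for every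
`a > A₀` the symbol `ℓ_{a,N}` has a zero `μ⁺(a)` in the upper half-plane with
`|Re μ⁺(a) + (1/2) a^(-2(1-ξ)) ∑_{j<N} c j| ≤ C a^(-2(1-ξ))` and
`|Im μ⁺(a) - a| ≤ C a^(-(1-2ξ))`, and its complex conjugate is also a zero of `ℓ_{a,N}`.
(Indexing is `0`-based: `c 0, γ 0` correspond to `c_1, γ_1`.) -/
theorem stmt_11
    (N : ℕ) (hN : 1 ≤ N) (c γs : ℕ → ℝ)
    (hc : ∀ k, k < N → 0 < c k)
    (hγ0 : 0 < γs 0)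
    (hγmono : ∀ i j : ℕ, i < j → j < N → γs i < γs j)
    (ξ : ℝ) (hξ0 : 0 ≤ ξ) (hξ1 : ξ < 1 / 2)
    (ℓ : ℝ → ℂ → ℂ)
    (hℓ : ∀ a : ℝ, ∀ ζ : ℂ, ℓ a ζ = ζ ^ 2 + (a : ℂ) ^ 2
        - ((a ^ (2 * ξ) : ℝ) : ℂ) * ∑ k ∈ Finset.range N, (c k : ℂ) / (ζ + (γs k : ℂ))) :
    ∃ C : ℝ, 0 < C ∧ ∃ A₀ : ℝ, 0 < A₀ ∧ ∀ a : ℝ, A₀ < a →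
      ∃ μ : ℂ, ℓ a μ = 0 ∧ 0 < μ.im ∧
        |μ.re + (1 / 2) * a ^ (-(2 * (1 - ξ))) * ∑ j ∈ Finset.range N, c j|
          ≤ C * a ^ (-(2 * (1 - ξ))) ∧
        |μ.im - a| ≤ C * a ^ (-(1 - 2 * ξ)) ∧
        ℓ a ((starRingEnd ℂ) μ) = 0 :=
  stmt_11_general N c γs ξ hξ1 ℓ hℓ
end

section
/- Assume additionally ∑_{k=1}^∞ c_k < +∞. Then for every a > 0, ξ ∈ [0,1] and every integer k ≥ 2, the series ∑_{j=1}^∞ c_j/(x + γ_j) converges absolutely for every real x ∈ (−γ_k, −γ_{k−1}), and the function ℓ_a has a real zero μ in the open interval (−γ_k, −γ_{k−1}). Moreover, if a^{2(1−ξ)} > S, then ℓ_a also has a real zero in (−γ_1, 0). -/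
/-!
Write `F x = ∑ⱼ c j / (x + γ j)`. As `∑ c j < ∞`, the series converges uniformly on sets
staying a fixed distance away from the poles `-γ j`, so `ℓ_a` is continuous off the poles.
At a pole `-γ k` only the `k`-th term blows up: for `x > -γ k`, dropping the positive terms
with `j > k` gives `F x ≥ c k / (x + γ k) + (a finite sum continuous at -γ k)`, and for
`-γ (k+1) < x < -γ k`, dropping the negative terms with `j < k` and bounding the terms with
`j > k` by `c j / (x + γ (k+1))` gives `F x ≤ c k / (x + γ k) + (∑ c) / (x + γ (k+1))`.
Hence `F → +∞` at `(-γ k)⁺` and `F → -∞` at `(-γ k)⁻`, so `ℓ_a` runs from `-∞` to `+∞`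
across `(-γ (k+1), -γ k)` and vanishes there by the intermediate value theorem. On
`(-γ 0, 0)` the right end is handled by `ℓ_a 0 = a² - a^(2ξ) S > 0` instead.
-/

open Filter Topology Set

section Series

variable {c γ : ℕ → ℝ} {x : ℝ}

theorem summable_div_add_of_pos (hc : ∀ j, 0 ≤ c j) (hcs : Summable c) (hγ : Monotone γ)
    {k : ℕ} (hk : 0 < x + γ k) : Summable fun j => c j / (x + γ j) := by
  refine (summable_nat_add_iff k).mp <| Summable.of_nonneg_of_le (fun j => ?_) (fun j => ?_)
    (((summable_nat_add_iff k).mpr hcs).div_const (x + γ k))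
  · exact div_nonneg (hc _) (hk.trans_le (by gcongr; exact hγ (by omega))).le
  · exact div_le_div_of_nonneg_left (hc _) hk (by gcongr; exact hγ (by omega))

theorem continuousOn_tsum_div (hc : ∀ j, 0 ≤ c j) (hcs : Summable c) {s : Set ℝ} {δ : ℝ}
    (hδ : 0 < δ) (hs : ∀ y ∈ s, ∀ j, δ ≤ |y + γ j|) :
    ContinuousOn (fun y => ∑' j, c j / (y + γ j)) s := by
  refine continuousOn_tsum (u := fun j => c j / δ) (fun j => ?_) (hcs.div_const δ)
    (fun j y hy => ?_)
  · refine continuousOn_const.div (by fun_prop) fun y hy h0 => ?_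
    have := hs y hy j
    rw [h0, abs_zero] at this
    linarith
  · rw [Real.norm_eq_abs, abs_div, abs_of_nonneg (hc j)]
    exact div_le_div_of_nonneg_left (hc j) hδ (hs y hy j)

theorem continuousAt_tsum_div (hc : ∀ j, 0 ≤ c j) (hcs : Summable c) {δ : ℝ} (hδ : 0 < δ)
    (hx : ∀ j, δ ≤ |x + γ j|) : ContinuousAt (fun y => ∑' j, c j / (y + γ j)) x := by
  refine (continuousOn_tsum_div hc hcs (half_pos hδ) fun y hy j => ?_).continuousAt
    (Metric.ball_mem_nhds x (half_pos hδ))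
  rw [Metric.mem_ball, Real.dist_eq] at hy
  have := abs_sub_abs_le_abs_sub (x + γ j) (y + γ j)
  rw [show x + γ j - (y + γ j) = -(y - x) by ring, abs_neg] at this
  linarith [hx j]

theorem div_add_sum_range_le_tsum_div (hc : ∀ j, 0 ≤ c j) (hcs : Summable c) (hγ : Monotone γ)
    {k : ℕ} (hk : 0 < x + γ k) :
    c k / (x + γ k) + ∑ j ∈ Finset.range k, c j / (x + γ j) ≤ ∑' j, c j / (x + γ j) := by
  have hs := summable_div_add_of_pos hc hcs hγ hk
  rw [← hs.sum_add_tsum_nat_add k, add_comm]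
  gcongr
  simpa using ((summable_nat_add_iff k).mpr hs).le_tsum 0 fun j _ =>
    div_nonneg (hc _) (hk.trans_le (by gcongr; exact hγ (by omega))).le

theorem tsum_div_le_div_add_div (hc : ∀ j, 0 ≤ c j) (hcs : Summable c) (hγ : Monotone γ)
    {k : ℕ} (hk : x + γ k < 0) (hk1 : 0 < x + γ (k + 1)) :
    ∑' j, c j / (x + γ j) ≤ c k / (x + γ k) + (∑' j, c j) / (x + γ (k + 1)) := by
  have hs := summable_div_add_of_pos hc hcs hγ hk1
  have head : ∑ j ∈ Finset.range k, c j / (x + γ j) ≤ 0 := Finset.sum_nonpos fun j hj =>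
    div_nonpos_of_nonneg_of_nonpos (hc j) (by linarith [hγ (Finset.mem_range.1 hj).le])
  have tail :
      ∑' j, c (j + (k + 1)) / (x + γ (j + (k + 1))) ≤ (∑' j, c j) / (x + γ (k + 1)) :=
    calc ∑' j, c (j + (k + 1)) / (x + γ (j + (k + 1)))
        _ ≤ ∑' j, c (j + (k + 1)) / (x + γ (k + 1)) :=
          Summable.tsum_le_tsum
            (fun j => div_le_div_of_nonneg_left (hc _) hk1 (by gcongr; exact hγ (by omega)))
            ((summable_nat_add_iff _).mpr hs) (((summable_nat_add_iff _).mpr hcs).div_const _)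
        _ = (∑' j, c (j + (k + 1))) / (x + γ (k + 1)) := tsum_div_const
        _ ≤ (∑' j, c j) / (x + γ (k + 1)) := by
          refine div_le_div_of_nonneg_right ?_ hk1.le
          rw [← hcs.sum_add_tsum_nat_add (k + 1)]
          exact le_add_of_nonneg_left (Finset.sum_nonneg fun j _ => hc j)
  rw [← hs.sum_add_tsum_nat_add (k + 1), Finset.sum_range_succ]
  linarith

theorem tendsto_tsum_div_nhdsGT (hc : ∀ j, 0 ≤ c j) (hcs : Summable c) (hγ : StrictMono γ)
    {k : ℕ} (hck : 0 < c k) :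
    Tendsto (fun x => ∑' j, c j / (x + γ j)) (𝓝[>] (-γ k)) atTop := by
  have shift : Tendsto (fun x => x + γ k) (𝓝[>] (-γ k)) (𝓝[>] 0) := by
    simpa using (continuous_add_const (γ k)).continuousWithinAt.tendsto_nhdsWithin
      (x := -γ k) (s := Ioi (-γ k)) (t := Ioi 0) fun x hx => by
        simp only [mem_Ioi] at hx ⊢; linarith
  have pole : Tendsto (fun x => c k / (x + γ k)) (𝓝[>] (-γ k)) atTop := by
    simpa [div_eq_mul_inv] using (tendsto_inv_nhdsGT_zero.comp shift).const_mul_atTop hck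
  have bounded : Tendsto (fun x => ∑ j ∈ Finset.range k, c j / (x + γ j)) (𝓝[>] (-γ k))
      (𝓝 (∑ j ∈ Finset.range k, c j / (-γ k + γ j))) := by
    refine tendsto_finsetSum _ fun j hj => ?_
    have : -γ k + γ j ≠ 0 := by linarith [hγ (Finset.mem_range.1 hj)]
    exact (continuousAt_const.div (continuousAt_id.add continuousAt_const) this).tendsto
      |>.mono_left nhdsWithin_le_nhds
  refine tendsto_atTop_mono' _ ?_ (pole.atTop_add bounded)
  filter_upwards [self_mem_nhdsWithin] with x hx
  exact div_add_sum_range_le_tsum_div hc hcs hγ.monotone (by rw [mem_Ioi] at hx; linarith)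

theorem tendsto_tsum_div_nhdsLT (hc : ∀ j, 0 ≤ c j) (hcs : Summable c) (hγ : StrictMono γ)
    {k : ℕ} (hck : 0 < c k) :
    Tendsto (fun x => ∑' j, c j / (x + γ j)) (𝓝[<] (-γ k)) atBot := by
  have hgap : -γ (k + 1) < -γ k := neg_lt_neg (hγ k.lt_succ_self)
  have shift : Tendsto (fun x => x + γ k) (𝓝[<] (-γ k)) (𝓝[<] 0) := by
    simpa using (continuous_add_const (γ k)).continuousWithinAt.tendsto_nhdsWithin
      (x := -γ k) (s := Iio (-γ k)) (t := Iio 0) fun x hx => by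
        simp only [mem_Iio] at hx ⊢; linarith
  have pole : Tendsto (fun x => c k / (x + γ k)) (𝓝[<] (-γ k)) atBot := by
    simpa [div_eq_mul_inv] using (tendsto_inv_nhdsLT_zero.comp shift).const_mul_atBot hck
  have bounded : Tendsto (fun x => (∑' j, c j) / (x + γ (k + 1))) (𝓝[<] (-γ k))
      (𝓝 ((∑' j, c j) / (-γ k + γ (k + 1)))) := by
    have : -γ k + γ (k + 1) ≠ 0 := by linarith
    exact (continuousAt_const.div (continuousAt_id.add continuousAt_const) this).tendsto
      |>.mono_left nhdsWithin_le_nhds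
  refine tendsto_atBot_mono' _ ?_ (pole.atBot_add bounded)
  filter_upwards [Ioo_mem_nhdsLT hgap] with x hx
  exact tsum_div_le_div_add_div hc hcs hγ.monotone (by linarith [hx.2]) (by linarith [hx.1])

end Series

theorem exists_eq_zero_of_eventually_neg {f : ℝ → ℝ} {u q : ℝ} (huq : u < q)
    (hf : ContinuousOn f (Ioc u q)) (hneg : ∀ᶠ x in 𝓝[>] u, f x < 0) (hq : 0 < f q) :
    ∃ x ∈ Ioo u q, f x = 0 := by
  obtain ⟨p, hp, hpu, hpq⟩ := (hneg.and (Ioo_mem_nhdsGT huq)).exists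
  obtain ⟨x, hx, hx0⟩ :=
    intermediate_value_Ioo hpq.le (hf.mono (Icc_subset_Ioc hpu le_rfl)) ⟨hp, hq⟩
  exact ⟨x, ⟨hpu.trans hx.1, hx.2⟩, hx0⟩

/-- The paper's `ℓ_a` is `symbol c γ (a ^ (2 * ξ)) (a ^ 2)`. -/
noncomputable def symbol (c γ : ℕ → ℝ) (A B x : ℝ) : ℝ :=
  x ^ 2 + B - A * ∑' j, c j / (x + γ j)

section Symbol

variable {c γ : ℕ → ℝ} {A B : ℝ}

theorem continuousAt_symbol (hc : ∀ j, 0 ≤ c j) (hcs : Summable c) {x δ : ℝ} (hδ : 0 < δ)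
    (hx : ∀ j, δ ≤ |x + γ j|) : ContinuousAt (symbol c γ A B) x :=
  ((continuousAt_id.pow 2).add continuousAt_const).sub
    (continuousAt_const.mul (continuousAt_tsum_div hc hcs hδ hx))

theorem continuousOn_symbol_Ioo (hc : ∀ j, 0 ≤ c j) (hcs : Summable c) (hγ : Monotone γ)
    (k : ℕ) : ContinuousOn (symbol c γ A B) (Ioo (-γ (k + 1)) (-γ k)) := by
  intro x hx
  refine (continuousAt_symbol hc hcs (δ := min (x + γ (k + 1)) (-(x + γ k)))
    (lt_min (by linarith [hx.1]) (by linarith [hx.2])) fun j => ?_).continuousWithinAt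
  rcases le_or_gt j k with hj | hj
  · rw [abs_of_neg (by linarith [hx.2, hγ hj])]
    linarith [min_le_right (x + γ (k + 1)) (-(x + γ k)), hγ hj]
  · have : γ (k + 1) ≤ γ j := hγ hj
    rw [abs_of_pos (by linarith [hx.1])]
    linarith [min_le_left (x + γ (k + 1)) (-(x + γ k))]

theorem continuousOn_symbol_Ioi (hc : ∀ j, 0 ≤ c j) (hcs : Summable c) (hγ : Monotone γ) :
    ContinuousOn (symbol c γ A B) (Ioi (-γ 0)) := by
  intro x hx
  rw [mem_Ioi] at hx
  refine (continuousAt_symbol hc hcs (δ := x + γ 0) (by linarith) fun j => ?_).continuousWithinAt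
  have : γ 0 ≤ γ j := hγ (Nat.zero_le j)
  rw [abs_of_pos (by linarith)]
  linarith

theorem tendsto_symbol_nhdsGT (hc : ∀ j, 0 ≤ c j) (hcs : Summable c) (hγ : StrictMono γ)
    (hA : 0 < A) {k : ℕ} (hck : 0 < c k) : Tendsto (symbol c γ A B) (𝓝[>] (-γ k)) atBot := by
  have hpoly : Tendsto (fun x : ℝ => x ^ 2 + B) (𝓝[>] (-γ k)) (𝓝 ((-γ k) ^ 2 + B)) :=
    ((continuous_pow 2).add continuous_const).tendsto _ |>.mono_left nhdsWithin_le_nhds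
  refine (hpoly.add_atBot (tendsto_neg_atTop_atBot.comp
    ((tendsto_tsum_div_nhdsGT hc hcs hγ hck).const_mul_atTop hA))).congr fun x => ?_
  simp [symbol, sub_eq_add_neg]

theorem tendsto_symbol_nhdsLT (hc : ∀ j, 0 ≤ c j) (hcs : Summable c) (hγ : StrictMono γ)
    (hA : 0 < A) {k : ℕ} (hck : 0 < c k) : Tendsto (symbol c γ A B) (𝓝[<] (-γ k)) atTop := by
  have hpoly : Tendsto (fun x : ℝ => x ^ 2 + B) (𝓝[<] (-γ k)) (𝓝 ((-γ k) ^ 2 + B)) :=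
    ((continuous_pow 2).add continuous_const).tendsto _ |>.mono_left nhdsWithin_le_nhds
  refine (hpoly.add_atTop (tendsto_neg_atBot_atTop.comp
    ((tendsto_tsum_div_nhdsLT hc hcs hγ hck).const_mul_atBot hA))).congr fun x => ?_
  simp [symbol, sub_eq_add_neg]

theorem exists_symbol_eq_zero_mem_Ioo (hc : ∀ j, 0 < c j) (hcs : Summable c)
    (hγ : StrictMono γ) (hA : 0 < A) (k : ℕ) :
    ∃ μ ∈ Ioo (-γ (k + 1)) (-γ k), symbol c γ A B μ = 0 := by
  have hc' : ∀ j, 0 ≤ c j := fun j => (hc j).le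
  have hgap : -γ (k + 1) < -γ k := neg_lt_neg (hγ k.lt_succ_self)
  have hcont := continuousOn_symbol_Ioo (A := A) (B := B) hc' hcs hγ.monotone k
  obtain ⟨q, hq, hqI⟩ :=
    (((tendsto_symbol_nhdsLT hc' hcs hγ hA (hc k)).eventually_gt_atTop 0).and
      (Ioo_mem_nhdsLT hgap)).exists
  obtain ⟨μ, hμ, hμ0⟩ := exists_eq_zero_of_eventually_neg hqI.1
    (hcont.mono (Ioc_subset_Ioo_right hqI.2))
    ((tendsto_symbol_nhdsGT hc' hcs hγ hA (hc (k + 1))).eventually_lt_atBot 0) hq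
  exact ⟨μ, Ioo_subset_Ioo_right hqI.2.le hμ, hμ0⟩

theorem exists_symbol_eq_zero_mem_Ioo_zero (hc : ∀ j, 0 < c j) (hcs : Summable c)
    (hγ : StrictMono γ) (hγ0 : 0 < γ 0) (hA : 0 < A) (h0 : 0 < symbol c γ A B 0) :
    ∃ μ ∈ Ioo (-γ 0) 0, symbol c γ A B μ = 0 :=
  exists_eq_zero_of_eventually_neg (neg_neg_iff_pos.2 hγ0)
    ((continuousOn_symbol_Ioi (fun j => (hc j).le) hcs hγ.monotone).mono Ioc_subset_Ioi_self)
    ((tendsto_symbol_nhdsGT (fun j => (hc j).le) hcs hγ hA (hc 0)).eventually_lt_atBot 0) h0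

end Symbol

theorem stmt_12_general
    (c γs : ℕ → ℝ)
    (hc : ∀ j, 0 < c j)
    (hγ0 : 0 < γs 0)
    (hγmono : StrictMono γs)
    (hcsum : Summable c)
    (a ξ : ℝ) (ha : 0 < a)
    (ℓ : ℝ → ℝ)
    (hℓ : ∀ x, ℓ x = x ^ 2 + a ^ 2 - a ^ (2 * ξ) * ∑' j, c j / (x + γs j)) :
    (∀ k : ℕ, 1 ≤ k →
      (∀ x ∈ Set.Ioo (-γs k) (-γs (k - 1)), Summable fun j => |c j / (x + γs j)|) ∧
      ∃ μ ∈ Set.Ioo (-γs k) (-γs (k - 1)), ℓ μ = 0) ∧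
    ((∑' j, c j / γs j) < a ^ (2 * (1 - ξ)) →
      ∃ μ ∈ Set.Ioo (-γs 0) 0, ℓ μ = 0) := by
  have hA : 0 < a ^ (2 * ξ) := Real.rpow_pos_of_pos ha _
  obtain rfl : ℓ = symbol c γs (a ^ (2 * ξ)) (a ^ 2) := funext hℓ
  refine ⟨fun k hk => ?_, fun hS => ?_⟩
  · obtain ⟨m, rfl⟩ := Nat.exists_eq_add_of_le' hk
    rw [Nat.add_sub_cancel]
    exact ⟨fun x hx => (summable_div_add_of_pos (fun j => (hc j).le) hcsum hγmono.monotone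
      (k := m + 1) (by linarith [hx.1])).abs, exists_symbol_eq_zero_mem_Ioo hc hcsum hγmono hA m⟩
  · refine exists_symbol_eq_zero_mem_Ioo_zero hc hcsum hγmono hγ0 hA ?_
    have hsplit : a ^ (2 * ξ) * a ^ (2 * (1 - ξ)) = a ^ 2 := by
      rw [← Real.rpow_add ha, show 2 * ξ + 2 * (1 - ξ) = ((2 : ℕ) : ℝ) by push_cast; ring,
        Real.rpow_natCast]
    have := mul_lt_mul_of_pos_left hS hA
    simp only [symbol, zero_add]
    linarith

/-- Assume additionally `∑ₖ c k < ∞`. Then for every `a > 0`, `ξ ∈ [0,1]` and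
every integer `k ≥ 2` (here `k ≥ 1` in `0`-based indexing), the series `∑ⱼ c j / (x + γ j)`
converges absolutely for every `x ∈ (-γ k, -γ (k-1))`, and `ℓ_a` has a real zero in
`(-γ k, -γ (k-1))`; moreover, if `a^(2(1-ξ)) > S`, then `ℓ_a` also has a real zero in
`(-γ 0, 0)`. (Indexing is `0`-based: `c 0, γ 0` correspond to `c_1, γ_1`.) -/
theorem stmt_12
    (c γs : ℕ → ℝ)
    (hc : ∀ j, 0 < c j)
    (hγ0 : 0 < γs 0)
    (hγmono : StrictMono γs)
    (hγtop : Filter.Tendsto γs Filter.atTop Filter.atTop)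
    (hSsum : Summable fun j => c j / γs j)
    (hS : (∑' j, c j / γs j) < 1)
    (hcsum : Summable c)
    (a ξ : ℝ) (ha : 0 < a) (hξ : ξ ∈ Set.Icc (0:ℝ) 1)
    (ℓ : ℝ → ℝ)
    (hℓ : ∀ x, ℓ x = x ^ 2 + a ^ 2 - a ^ (2 * ξ) * ∑' j, c j / (x + γs j)) :
    (∀ k : ℕ, 1 ≤ k →
      (∀ x ∈ Set.Ioo (-γs k) (-γs (k - 1)), Summable fun j => |c j / (x + γs j)|) ∧
      ∃ μ ∈ Set.Ioo (-γs k) (-γs (k - 1)), ℓ μ = 0) ∧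
    ((∑' j, c j / γs j) < a ^ (2 * (1 - ξ)) →
      ∃ μ ∈ Set.Ioo (-γs 0) 0, ℓ μ = 0) :=
  stmt_12_general c γs hc hγ0 hγmono hcsum a ξ ha ℓ hℓ
end

section
/- Assume there exist constants A > 0, B > 0, C > 0, α ∈ (0, 1] and β with α + β > 1 such that |c_k − A k^{−α}| ≤ C k^{−α−1} and |γ_k − B k^{β}| ≤ C k^{β−1} for all k ≥ 1 (so that in general ∑ c_k may diverge). Then for every a > 0, ξ ∈ [0,1] and every integer k ≥ 2, the series ∑_{j=1}^∞ c_j/(x + γ_j) converges absolutely for every real x ∈ (−γ_k, −γ_{k−1}) and ℓ_a has a real zero in (−γ_k, −γ_{k−1}); moreover, for ξ ∈ [0, 1) and every ε > 0 there exists A₀ > 0 such that for all a > A₀ every real zero of ℓ_a in (−γ_k, −γ_{k−1}) lies in (−γ_k, −γ_k + ε), i.e. these zeros converge to −γ_k as a → +∞. -/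
open Filter Set Finset


private lemma key_bound' {cj x g : ℝ} (hcj : 0 < cj) (hg : 2 * |x| + 2 ≤ g) :
    |cj / (x + g)| ≤ 2 * (cj / g) := by
  have hax : -|x| ≤ x := neg_abs_le x
  have h0 := abs_nonneg x
  have hgpos : 0 < g := by linarith
  have hden : g / 2 ≤ x + g := by linarith
  have hdpos : 0 < x + g := by linarith
  rw [abs_of_pos (div_pos hcj hdpos)]
  have h1 : cj / (x + g) ≤ cj / (g / 2) := by
    apply div_le_div_of_nonneg_left hcj.le (by linarith) hden
  have h2 : cj / (g / 2) = 2 * (cj / g) := by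
    field_simp
  linarith

private lemma abs_summable_aux (c γs : ℕ → ℝ) (hc : ∀ j, 0 < c j)
    (hγtop : Filter.Tendsto γs Filter.atTop Filter.atTop)
    (hSsum : Summable fun j => c j / γs j) (x : ℝ) :
    Summable fun j => |c j / (x + γs j)| := by
  obtain ⟨N, hN⟩ := Filter.eventually_atTop.1 (hγtop.eventually_ge_atTop (2 * |x| + 2))
  rw [← summable_nat_add_iff N]
  have hs : Summable fun j => 2 * (c (j + N) / γs (j + N)) :=
    ((summable_nat_add_iff N).2 hSsum).mul_left 2
  refine hs.of_nonneg_of_le (fun j => abs_nonneg _) fun j => ?_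
  exact key_bound' (hc _) (hN (j + N) (Nat.le_add_left N j))

private lemma contOn_aux (c γs : ℕ → ℝ) (hc : ∀ j, 0 < c j)
    (hγmono : StrictMono γs)
    (hγtop : Tendsto γs atTop atTop)
    (hSsum : Summable fun j => c j / γs j)
    (hγ0 : 0 < γs 0)
    (k : ℕ) (hk : 1 ≤ k) (p q : ℝ) (hp : -γs k < p) (hq : q < -γs (k - 1)) :
    ContinuousOn (fun x => ∑' j, c j / (x + γs j)) (Set.Icc p q) := by
  obtain ⟨m₀, hm₀⟩ := Filter.eventually_atTop.1 (hγtop.eventually_ge_atTop (2 * |p| + 2))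
  set m := max m₀ (k + 1) with hm
  have hγm : 2 * |p| + 2 ≤ γs m := hm₀ m (le_max_left _ _)
  have hkm : k + 1 ≤ m := le_max_right _ _
  have hsum : ∀ x : ℝ, Summable fun j => c j / (x + γs j) := fun x =>
    (abs_summable_aux c γs hc hγtop hSsum x).of_abs
  have hEq : (fun x => ∑' j, c j / (x + γs j))
      = fun x => (∑ j ∈ Finset.range m, c j / (x + γs j))
        + ∑' j, c (j + m) / (x + γs (j + m)) :=
    funext fun x => (Summable.sum_add_tsum_nat_add m (hsum x)).symm
  rw [hEq]
  apply ContinuousOn.add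
  · apply continuousOn_finset_sum
    intro j _
    apply ContinuousOn.div continuousOn_const (by fun_prop)
    intro x hx
    rcases lt_or_ge j k with hjk | hjk
    · have hj1 : j ≤ k - 1 := Nat.le_sub_one_of_lt hjk
      have h1 : γs j ≤ γs (k - 1) := hγmono.monotone hj1
      have h2 := hx.2
      have : x + γs j < 0 := by linarith
      exact this.ne
    · have h1 : γs k ≤ γs j := hγmono.monotone hjk
      have h2 := hx.1
      have : 0 < x + γs j := by linarith
      exact this.ne'
  · apply continuousOn_tsum (u := fun j => 2 * (c (j + m) / γs (j + m)))
    · intro j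
      apply ContinuousOn.div continuousOn_const (by fun_prop)
      intro x hx
      have h1 : γs m ≤ γs (j + m) := hγmono.monotone (Nat.le_add_left m j)
      have h2 : -|p| ≤ p := neg_abs_le p
      have h3 := hx.1
      have h0 := abs_nonneg p
      have : 0 < x + γs (j + m) := by linarith
      exact this.ne'
    · exact ((summable_nat_add_iff m).2 hSsum).mul_left 2
    · intro j x hx
      rw [Real.norm_eq_abs]
      have h1 : γs m ≤ γs (j + m) := hγmono.monotone (Nat.le_add_left m j)
      have h2 : 2 * |p| + 2 ≤ γs (j + m) := by linarith
      have hγk1 : 0 < γs (k - 1) := lt_of_lt_of_le hγ0 (hγmono.monotone (Nat.zero_le _))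
      have hx0 : x < 0 := lt_of_le_of_lt hx.2 (by linarith)
      have hp0 : p < 0 := lt_of_le_of_lt hx.1 hx0
      have h4 : |x| ≤ |p| := by
        rw [abs_of_neg hx0, abs_of_neg hp0]
        linarith [hx.1]
      exact key_bound' (hc _) (by linarith)

set_option maxHeartbeats 1000000 in
private lemma exists_zero_aux
    (c γs : ℕ → ℝ)
    (hc : ∀ j, 0 < c j)
    (hγ0 : 0 < γs 0)
    (hγmono : StrictMono γs)
    (hγtop : Filter.Tendsto γs Filter.atTop Filter.atTop)
    (hSsum : Summable fun j => c j / γs j)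
    (a : ℝ) (ha : 0 < a) (ξ : ℝ) (hξ : ξ ∈ Set.Icc (0:ℝ) 1) (k : ℕ) (hk : 1 ≤ k) :
      (∃ μ ∈ Set.Ioo (-γs k) (-γs (k - 1)),
        μ ^ 2 + a ^ 2 - a ^ (2 * ξ) * (∑' j, c j / (μ + γs j)) = 0) := by
  have hsum : ∀ x : ℝ, Summable fun j => c j / (x + γs j) := fun x =>
    (abs_summable_aux c γs hc hγtop hSsum x).of_abs
  have hγpos : ∀ j, 0 < γs j := fun j => lt_of_lt_of_le hγ0 (hγmono.monotone (Nat.zero_le j))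
  have hk1 : k - 1 + 1 = k := Nat.succ_pred_eq_of_pos hk
  have hγlt : γs (k - 1) < γs k := hγmono (Nat.sub_lt hk one_pos)
  obtain ⟨w, hw⟩ : ∃ x : ℝ, x = γs k - γs (k - 1) := ⟨_, rfl⟩
  have hwpos : 0 < w := by rw [hw]; linarith
  obtain ⟨mid, hmid⟩ : ∃ x : ℝ, x = -γs k + w / 2 := ⟨_, rfl⟩
  have hmid2 : mid = -γs (k - 1) - w / 2 := by rw [hmid, hw]; ring
  obtain ⟨E, hE⟩ : ∃ x : ℝ, x = a ^ (2 * ξ) := ⟨_, rfl⟩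
  have hEpos : 0 < E := hE ▸ Real.rpow_pos_of_pos ha _
  -- constants for the left endpoint
  obtain ⟨L, hL⟩ : ∃ x : ℝ, x = ∑ j ∈ Finset.range k, c j / (mid + γs j) := ⟨_, rfl⟩
  obtain ⟨R, hR⟩ : ∃ x : ℝ, x = max ((γs k ^ 2 + a ^ 2) / E - L) 0 + 1 := ⟨_, rfl⟩
  have hRpos : 0 < R := by
    rw [hR]
    have : (0:ℝ) ≤ max ((γs k ^ 2 + a ^ 2) / E - L) 0 := le_max_right _ _
    linarith
  obtain ⟨t, ht⟩ : ∃ x : ℝ, x = min (w / 4) (c k / R) := ⟨_, rfl⟩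
  have htpos : 0 < t := ht ▸ lt_min (by linarith) (div_pos (hc k) hRpos)
  have htw : t ≤ w / 4 := ht ▸ min_le_left _ _
  obtain ⟨p, hp⟩ : ∃ x : ℝ, x = -γs k + t := ⟨_, rfl⟩
  have hpl : -γs k < p := by rw [hp]; linarith
  have hpmid : p ≤ mid - w / 4 := by rw [hp, hmid]; linarith
  -- constants for the right endpoint
  obtain ⟨T, hT⟩ : ∃ x : ℝ, x = ∑' j, c (j + k) / (mid + γs (j + k)) := ⟨_, rfl⟩
  have hmidγ : ∀ j : ℕ, w / 2 ≤ mid + γs (j + k) := by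
    intro j
    have : γs k ≤ γs (j + k) := hγmono.monotone (Nat.le_add_left k j)
    rw [hmid]; linarith
  have hTsum : Summable fun j => c (j + k) / (mid + γs (j + k)) :=
    (summable_nat_add_iff k).2 (hsum mid)
  have hT0 : 0 ≤ T := hT ▸ tsum_nonneg fun j => div_nonneg (hc _).le (by linarith [hmidγ j])
  obtain ⟨T', hT'⟩ : ∃ x : ℝ, x = max T 1 := ⟨_, rfl⟩
  have hT'1 : (1:ℝ) ≤ T' := hT' ▸ le_max_right _ _
  have hT'T : T ≤ T' := hT' ▸ le_max_left _ _
  obtain ⟨s, hs⟩ : ∃ x : ℝ, x = min (w / 4) (c (k - 1) / T') := ⟨_, rfl⟩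
  have hspos : 0 < s := hs ▸ lt_min (by linarith) (div_pos (hc _) (by linarith))
  have hsw : s ≤ w / 4 := hs ▸ min_le_left _ _
  obtain ⟨q, hq⟩ : ∃ x : ℝ, x = -γs (k - 1) - s := ⟨_, rfl⟩
  have hqr : q < -γs (k - 1) := by rw [hq]; linarith
  have hqmid : mid + w / 4 ≤ q := by rw [hq, hmid2]; linarith
  have hpq : p < q := by linarith
  have hql : -γs k < q := by rw [hmid] at hqmid; linarith
  -- f p < 0
  have hgp : L + c k / (p + γs k) ≤ ∑' j, c j / (p + γs j) := by
    rw [← Summable.sum_add_tsum_nat_add (k + 1) (hsum p)]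
    have htail : 0 ≤ ∑' j, c (j + (k + 1)) / (p + γs (j + (k + 1))) := by
      apply tsum_nonneg
      intro j
      have h1 : γs k < γs (j + (k + 1)) := hγmono (by omega)
      exact div_nonneg (hc _).le (by linarith)
    have hhead : L + c k / (p + γs k) ≤ ∑ j ∈ Finset.range (k + 1), c j / (p + γs j) := by
      rw [Finset.sum_range_succ]
      have : L ≤ ∑ j ∈ Finset.range k, c j / (p + γs j) := by
        rw [hL]
        apply Finset.sum_le_sum
        intro j hj
        have hj1 : γs j ≤ γs (k - 1) :=
          hγmono.monotone (Nat.le_sub_one_of_lt (Finset.mem_range.1 hj))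
        have hd1 : mid + γs j < 0 := by rw [hmid2]; linarith
        have hd2 : p + γs j ≤ mid + γs j := by linarith
        have h3 : c j / -(p + γs j) ≤ c j / -(mid + γs j) :=
          div_le_div_of_nonneg_left (hc _).le (by linarith) (by linarith)
        rw [div_neg, div_neg] at h3
        linarith
      linarith
    linarith
  have hckt : R ≤ c k / (p + γs k) := by
    have h1 : p + γs k = t := by rw [hp]; ring
    rw [h1, le_div_iff₀ htpos]
    have h2 : t ≤ c k / R := by rw [ht]; exact min_le_right _ _
    calc R * t ≤ R * (c k / R) := by
          exact mul_le_mul_of_nonneg_left h2 hRpos.le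
      _ = c k := by field_simp
  have hfp : p ^ 2 + a ^ 2 - E * (∑' j, c j / (p + γs j)) < 0 := by
    have h1 : L + R ≤ ∑' j, c j / (p + γs j) := by linarith
    have h2 : (γs k ^ 2 + a ^ 2) / E - L ≤ R - 1 := by
      have := le_max_left ((γs k ^ 2 + a ^ 2) / E - L) 0
      rw [hR]
      linarith
    have h3 : γs k ^ 2 + a ^ 2 ≤ E * (R - 1 + L) := by
      have h2' : (γs k ^ 2 + a ^ 2) / E ≤ R - 1 + L := by linarith
      calc γs k ^ 2 + a ^ 2 = (γs k ^ 2 + a ^ 2) / E * E := by field_simp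
        _ ≤ (R - 1 + L) * E := mul_le_mul_of_nonneg_right h2' hEpos.le
        _ = E * (R - 1 + L) := by ring
    have hpneg : p < 0 := by
      have := hγpos (k - 1)
      linarith [hqr, hpq]
    have hp2 : p ^ 2 < γs k ^ 2 := sq_lt_sq' hpl (by linarith [hγpos k])
    have h4 : E * (L + R) ≤ E * (∑' j, c j / (p + γs j)) :=
      mul_le_mul_of_nonneg_left h1 hEpos.le
    have h5 : E * (R - 1 + L) = E * (L + R) - E := by ring
    linarith
  -- f q > 0
  have hgq : (∑' j, c j / (q + γs j)) ≤ 0 := by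
    rw [← Summable.sum_add_tsum_nat_add k (hsum q)]
    have htail : (∑' j, c (j + k) / (q + γs (j + k))) ≤ T := by
      rw [hT]
      refine Summable.tsum_le_tsum (fun j => ?_) ((summable_nat_add_iff k).2 (hsum q)) hTsum
      exact div_le_div_of_nonneg_left (hc _).le (by linarith [hmidγ j]) (by linarith [hmidγ j])
    have hhead : (∑ j ∈ Finset.range k, c j / (q + γs j)) ≤ -T' := by
      have hsplit : ∑ j ∈ Finset.range k, c j / (q + γs j)
          = (∑ j ∈ Finset.range (k - 1), c j / (q + γs j)) + c (k - 1) / (q + γs (k - 1)) := by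
        conv_lhs => rw [← hk1]
        rw [Finset.sum_range_succ]
      rw [hsplit]
      have h1 : (∑ j ∈ Finset.range (k - 1), c j / (q + γs j)) ≤ 0 := by
        apply Finset.sum_nonpos
        intro j hj
        have : γs j < γs (k - 1) := hγmono (Finset.mem_range.1 hj)
        exact div_nonpos_of_nonneg_of_nonpos (hc _).le (by rw [hq]; linarith)
      have h2 : c (k - 1) / (q + γs (k - 1)) = -(c (k - 1) / s) := by
        rw [hq]
        rw [show -γs (k - 1) - s + γs (k - 1) = -s by ring, div_neg]
      have h3 : T' ≤ c (k - 1) / s := by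
        rw [le_div_iff₀ hspos]
        have h4 : s ≤ c (k - 1) / T' := by rw [hs]; exact min_le_right _ _
        calc T' * s ≤ T' * (c (k - 1) / T') := mul_le_mul_of_nonneg_left h4 (by linarith)
          _ = c (k - 1) := by field_simp
      rw [h2]
      linarith
    linarith
  have hfq : 0 < q ^ 2 + a ^ 2 - E * (∑' j, c j / (q + γs j)) := by
    nlinarith [mul_le_mul_of_nonneg_left hgq hEpos.le, sq_nonneg q]
  -- IVT
  have hcont : ContinuousOn
      (fun x => x ^ 2 + a ^ 2 - E * ∑' j, c j / (x + γs j)) (Set.Icc p q) := by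
    apply ContinuousOn.sub
    · exact (continuous_pow 2).continuousOn.add continuousOn_const
    · exact continuousOn_const.mul
        (contOn_aux c γs hc hγmono hγtop hSsum hγ0 k hk p q hpl hqr)
  have hIvt := intermediate_value_Ioo hpq.le hcont
  have h0mem : (0:ℝ) ∈ Set.Ioo
      (p ^ 2 + a ^ 2 - E * ∑' j, c j / (p + γs j))
      (q ^ 2 + a ^ 2 - E * ∑' j, c j / (q + γs j)) := ⟨hfp, hfq⟩
  obtain ⟨μ, hμmem, hμ0⟩ := hIvt h0mem
  rw [hE] at hμ0
  exact ⟨μ, ⟨lt_trans hpl hμmem.1, lt_trans hμmem.2 hqr⟩, hμ0⟩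

private lemma part3_aux
    (c γs : ℕ → ℝ)
    (hc : ∀ j, 0 < c j)
    (hγ0 : 0 < γs 0)
    (hγmono : StrictMono γs)
    (hγtop : Filter.Tendsto γs Filter.atTop Filter.atTop)
    (hSsum : Summable fun j => c j / γs j) :
    (∀ ξ : ℝ, 0 ≤ ξ → ξ < 1 → ∀ k : ℕ, 1 ≤ k → ∀ ε : ℝ, 0 < ε →
      ∃ A₀ : ℝ, 0 < A₀ ∧ ∀ a : ℝ, A₀ < a →
        ∀ μ ∈ Set.Ioo (-γs k) (-γs (k - 1)),
          μ ^ 2 + a ^ 2 - a ^ (2 * ξ) * (∑' j, c j / (μ + γs j)) = 0 →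
            μ < -γs k + ε) := by
  have hsum : ∀ x : ℝ, Summable fun j => c j / (x + γs j) := fun x =>
    (abs_summable_aux c γs hc hγtop hSsum x).of_abs
  intro ξ hξ0 hξ1 k hk ε hε
  set x0 := ε - γs k with hx0
  set M := max (∑' j, c (j + k) / (x0 + γs (j + k))) 0 with hM
  have hM0 : 0 ≤ M := le_max_right _ _
  set z := 2 - 2 * ξ with hz
  have hzpos : 0 < z := by rw [hz]; linarith
  refine ⟨max 1 ((M + 1) ^ z⁻¹), lt_of_lt_of_le one_pos (le_max_left _ _), ?_⟩
  intro a haA μ hμ hroot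
  by_contra hcon
  push_neg at hcon
  have ha1 : 1 < a := lt_of_le_of_lt (le_max_left _ _) haA
  have ha0 : 0 < a := by linarith
  have hμx0 : x0 ≤ μ := by rw [hx0]; linarith
  have hγk1 : γs (k - 1) < γs k := hγmono (Nat.sub_lt hk one_pos)
  -- g μ ≤ M
  have hgμ : (∑' j, c j / (μ + γs j)) ≤ M := by
    rw [← Summable.sum_add_tsum_nat_add k (hsum μ)]
    have h1 : ∑ j ∈ Finset.range k, c j / (μ + γs j) ≤ 0 := by
      apply Finset.sum_nonpos
      intro j hj
      have hj1 : γs j ≤ γs (k - 1) :=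
        hγmono.monotone (Nat.le_sub_one_of_lt (Finset.mem_range.1 hj))
      have h2 := hμ.2
      exact div_nonpos_of_nonneg_of_nonpos (hc j).le (by linarith)
    have h2 : (∑' j, c (j + k) / (μ + γs (j + k))) ≤ M := by
      refine le_trans (Summable.tsum_le_tsum (fun j => ?_)
        ((summable_nat_add_iff k).2 (hsum μ)) ((summable_nat_add_iff k).2 (hsum x0)))
        (le_max_left _ _)
      have hd : 0 < x0 + γs (j + k) := by
        have : γs k ≤ γs (j + k) := hγmono.monotone (Nat.le_add_left k j)
        rw [hx0]; linarith
      exact div_le_div_of_nonneg_left (hc _).le hd (by linarith)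
    linarith
  -- arithmetic contradiction
  have hE : (0:ℝ) < a ^ (2 * ξ) := Real.rpow_pos_of_pos ha0 _
  have key : a ^ 2 ≤ a ^ (2 * ξ) * M := by
    nlinarith [sq_nonneg μ, mul_le_mul_of_nonneg_left hgμ hE.le]
  have hsplit : a ^ (2 * ξ) * a ^ z = a ^ 2 := by
    rw [hz, ← Real.rpow_add ha0]
    have : 2 * ξ + (2 - 2 * ξ) = 2 := by ring
    rw [this]
    rw [show (2:ℝ) = ((2:ℕ):ℝ) by norm_num, Real.rpow_natCast]
  have hza : a ^ z ≤ M := by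
    have h := key
    rw [← hsplit] at h
    exact le_of_mul_le_mul_left h hE
  have hlb : M + 1 ≤ a ^ z := by
    have h0 : (0:ℝ) ≤ M + 1 := by linarith
    have h2 : ((M + 1) ^ z⁻¹) ^ z ≤ (max 1 ((M + 1) ^ z⁻¹)) ^ z :=
      Real.rpow_le_rpow (Real.rpow_nonneg h0 _) (le_max_right _ _) hzpos.le
    have h3 : ((M + 1) ^ z⁻¹) ^ z = M + 1 := by
      rw [← Real.rpow_mul h0, inv_mul_cancel₀ hzpos.ne', Real.rpow_one]
    have h4 : (max 1 ((M + 1) ^ z⁻¹)) ^ z < a ^ z :=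
      Real.rpow_lt_rpow (le_trans zero_le_one (le_max_left _ _)) haA hzpos
    linarith
  linarith

/-- Assume `|c k - A k^(-α)| ≤ C k^(-α-1)` and `|γ k - B k^β| ≤ C k^(β-1)`
for all `k ≥ 1` (here `0`-based indexing: index `k` corresponds to `k+1`), with `A, B, C > 0`,
`α ∈ (0,1]`, `α + β > 1` (so `∑ c k` may diverge). Then for every `a > 0`, `ξ ∈ [0,1]` and
integer `k ≥ 2` (here `k ≥ 1`), the series `∑ⱼ c j/(x + γ j)` converges absolutely for every
`x ∈ (-γ k, -γ (k-1))` and `ℓ_a` has a real zero in `(-γ k, -γ (k-1))`; moreover, for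
`ξ ∈ [0,1)` and every `ε > 0` there is `A₀ > 0` such that for all `a > A₀` every real zero
of `ℓ_a` in `(-γ k, -γ (k-1))` lies in `(-γ k, -γ k + ε)`, i.e. these zeros converge to
`-γ k` as `a → +∞`. -/
theorem stmt_18
    (c γs : ℕ → ℝ)
    (hc : ∀ j, 0 < c j)
    (hγ0 : 0 < γs 0)
    (hγmono : StrictMono γs)
    (hγtop : Filter.Tendsto γs Filter.atTop Filter.atTop)
    (hSsum : Summable fun j => c j / γs j)
    (hS : (∑' j, c j / γs j) < 1)
    (A B C : ℝ) (hA : 0 < A) (hB : 0 < B) (hC : 0 < C)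
    (α β : ℝ) (hα0 : 0 < α) (hα1 : α ≤ 1) (hαβ : 1 < α + β)
    (hcasymp : ∀ k : ℕ, |c k - A * ((k + 1 : ℕ) : ℝ) ^ (-α)|
        ≤ C * ((k + 1 : ℕ) : ℝ) ^ (-α - 1))
    (hγasymp : ∀ k : ℕ, |γs k - B * ((k + 1 : ℕ) : ℝ) ^ β|
        ≤ C * ((k + 1 : ℕ) : ℝ) ^ (β - 1)) :
    (∀ a : ℝ, 0 < a → ∀ ξ ∈ Set.Icc (0:ℝ) 1, ∀ k : ℕ, 1 ≤ k →
      (∀ x ∈ Set.Ioo (-γs k) (-γs (k - 1)), Summable fun j => |c j / (x + γs j)|) ∧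
      (∃ μ ∈ Set.Ioo (-γs k) (-γs (k - 1)),
        μ ^ 2 + a ^ 2 - a ^ (2 * ξ) * (∑' j, c j / (μ + γs j)) = 0)) ∧
    (∀ ξ : ℝ, 0 ≤ ξ → ξ < 1 → ∀ k : ℕ, 1 ≤ k → ∀ ε : ℝ, 0 < ε →
      ∃ A₀ : ℝ, 0 < A₀ ∧ ∀ a : ℝ, A₀ < a →
        ∀ μ ∈ Set.Ioo (-γs k) (-γs (k - 1)),
          μ ^ 2 + a ^ 2 - a ^ (2 * ξ) * (∑' j, c j / (μ + γs j)) = 0 →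
            μ < -γs k + ε) := by
  constructor
  · rintro a ha ξ hξ k hk
    exact ⟨fun x _ => abs_summable_aux c γs hc hγtop hSsum x,
      exists_zero_aux c γs hc hγ0 hγmono hγtop hSsum a ha ξ hξ k hk⟩
  · exact part3_aux c γs hc hγ0 hγmono hγtop hSsum
end
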